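/- arXiv:1502.06102 — 6 statements merged into one kernel-verified Lean document; each statement's English description precedes it below -/
import Mathlib

section
/- For every M ≥ δ > 0 there exist ρ ∈ (0,1), c₀ > 0 and C > 0, depending only on M and δ, with the following property. Let h be holomorphic on the unit disc D(0,1) ⊂ ℂ, even (h(−z) = h(z)), real-valued on (−1,1), with |h(z)| ≤ M on D(0,1), h″(0) ≥ δ, and −c₀ < h(0) < 0. Then there exist a real number ε_c ∈ (0, ρ) with ε_c² ≤ C·|h(0)|, and a holomorphic function m on D(0,ρ), real-valued and strictly positive on (−ρ, ρ), such that h(ε) = m(ε)·(ε² − ε_c²) for all ε ∈ D(0,ρ). In particular, the only zeros of h in D(0,ρ) are the two simple real zeros ±ε_c. -/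
/-!
Cauchy's estimate bounds the third derivative of `h` on the disc of radius `1/2` by `O(M)`, so
(as `h'(0) = 0` by evenness) `h z = h 0 + h''(0) z² / 2 + O(M |z|³)`. On the real axis this makes
`h` grow at least like `h 0 + δ x² / 4` near `0`, which produces a root `ε_c` with
`δ ε_c² / 4 ≤ |h 0|`, and `-ε_c` is a root by evenness. Dividing out both roots,
`m = dslope (dslope h ε_c) (-ε_c)` is holomorphic; on circles of radius `r ≥ 2 ε_c` the Taylor
bound gives `|m - h''(0)/2| = O(M r)`, and by the maximum principle this holds inside as well.
Hence `m` stays close to `h''(0)/2`: it has no zeros and positive real part on the real axis.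
-/

open Metric Set Topology

theorem norm_le_mul_pow_succ_of_norm_deriv_le {E : Type*} [NormedAddCommGroup E]
    [NormedSpace ℂ E] {f f' : ℂ → E} {r C : ℝ} {n : ℕ} (hC : 0 ≤ C)
    (hf : ∀ w ∈ closedBall (0 : ℂ) r, HasDerivAt f (f' w) w)
    (hf' : ∀ w ∈ closedBall (0 : ℂ) r, ‖f' w‖ ≤ C * ‖w‖ ^ n) (h0 : f 0 = 0) :
    ∀ z ∈ closedBall (0 : ℂ) r, ‖f z‖ ≤ C * ‖z‖ ^ (n + 1) := by
  intro z hz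
  have hsub : closedBall (0 : ℂ) ‖z‖ ⊆ closedBall 0 r :=
    closedBall_subset_closedBall (mem_closedBall_zero_iff.1 hz)
  have hmvt := (convex_closedBall (0 : ℂ) ‖z‖).norm_image_sub_le_of_norm_hasDerivWithin_le
    (fun w hw => (hf w (hsub hw)).hasDerivWithinAt)
    (fun w hw => (hf' w (hsub hw)).trans <| mul_le_mul_of_nonneg_left
      (pow_le_pow_left₀ (norm_nonneg w) (mem_closedBall_zero_iff.1 hw) n) hC)
    (mem_closedBall_self (norm_nonneg z)) (mem_closedBall_zero_iff.2 le_rfl)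
  rw [h0, sub_zero, sub_zero] at hmvt
  rwa [pow_succ, ← mul_assoc]

theorem norm_sub_taylor_two_le {f : ℂ → ℂ} {M : ℝ} (hf : DifferentiableOn ℂ f (ball 0 1))
    (hM : ∀ z ∈ ball (0 : ℂ) 1, ‖f z‖ ≤ M) {z : ℂ} (hz : z ∈ closedBall (0 : ℂ) (1 / 2)) :
    ‖f z - f 0 - deriv f 0 * z - deriv (deriv f) 0 / 2 * z ^ 2‖ ≤ 384 * M * ‖z‖ ^ 3 := by
  have hM0 : 0 ≤ M := (norm_nonneg _).trans (hM 0 (mem_ball_self one_pos))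
  have hsub : closedBall (0 : ℂ) (1 / 2) ⊆ ball 0 1 := closedBall_subset_ball (by norm_num)
  have hderiv : ∀ {g : ℂ → ℂ}, DifferentiableOn ℂ g (ball 0 1) →
      ∀ w ∈ closedBall (0 : ℂ) (1 / 2), HasDerivAt g (deriv g w) w := fun hg w hw =>
    (hg.differentiableAt (isOpen_ball.mem_nhds (hsub hw))).hasDerivAt
  have hf1 := hf.deriv isOpen_ball
  have hf2 := hf1.deriv isOpen_ball
  -- Cauchy's estimate on `ball w (1/4)`: `3! * M / (1/4) ^ 3 = 384 * M`.
  have hf3 : ∀ w ∈ closedBall (0 : ℂ) (1 / 2),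
      ‖deriv (deriv (deriv f)) w‖ ≤ 384 * M * ‖w‖ ^ 0 := by
    intro w hw
    have hball : closedBall w (1 / 4) ⊆ ball (0 : ℂ) 1 :=
      closedBall_subset_ball' (by rw [mem_closedBall] at hw; linarith)
    have := Complex.norm_iteratedDeriv_le_of_forall_mem_sphere_norm_le 3
      (by norm_num : (0 : ℝ) < 1 / 4)
      (hf.mono ((closure_ball w (by norm_num)).subset.trans hball)).diffContOnCl
      (fun u hu => hM u (hball (sphere_subset_closedBall hu)))
    rw [iteratedDeriv_succ, iteratedDeriv_succ, iteratedDeriv_one] at this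
    norm_num [Nat.factorial] at this ⊢
    linarith
  have hrem2 := norm_le_mul_pow_succ_of_norm_deriv_le
    (f := fun w => deriv (deriv f) w - deriv (deriv f) 0)
    (by positivity) (fun w hw => (hderiv hf2 w hw).sub_const _) hf3 (sub_self _)
  have hrem1 := norm_le_mul_pow_succ_of_norm_deriv_le
    (f := fun w => deriv f w - deriv f 0 - deriv (deriv f) 0 * w)
    (by positivity) (fun w hw => by
      simpa using ((hderiv hf1 w hw).sub_const _).fun_sub (hasDerivAt_const_mul _))
    hrem2 (by simp)
  exact norm_le_mul_pow_succ_of_norm_deriv_le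
    (f := fun w => f w - f 0 - deriv f 0 * w - deriv (deriv f) 0 / 2 * w ^ 2)
    (by positivity) (fun w hw => by
      convert (((hderiv hf w hw).sub_const (f 0)).fun_sub
        (hasDerivAt_const_mul (deriv f 0))).fun_sub
        ((hasDerivAt_pow 2 w).const_mul (deriv (deriv f) 0 / 2)) using 1
      push_cast; ring)
    hrem1 (by simp) z hz

theorem deriv_eq_zero_of_even {f : ℂ → ℂ} (hf : (fun z => f (-z)) =ᶠ[𝓝 0] f) : deriv f 0 = 0 := by
  have := hf.deriv_eq
  rw [deriv_comp_neg, neg_zero] at this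
  linear_combination -this / 2

theorem exists_mem_Ioo_eq_zero_of_quadratic_lower_bound {F : ℝ → ℝ} {b κ : ℝ} (hb : 0 ≤ b)
    (hF : ContinuousOn F (Icc 0 b)) (hlow : ∀ x ∈ Icc 0 b, F 0 + κ * x ^ 2 ≤ F x)
    (h0 : F 0 < 0) (hb' : 0 < F 0 + κ * b ^ 2) :
    ∃ x ∈ Ioo 0 b, F x = 0 ∧ κ * x ^ 2 ≤ -F 0 := by
  obtain ⟨x, hx, hFx⟩ := intermediate_value_Ioo hb hF
    ⟨h0, hb'.trans_le (hlow b ⟨hb, le_rfl⟩)⟩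
  refine ⟨x, hx, hFx, ?_⟩
  linarith [hlow x (Ioo_subset_Icc_self hx)]

theorem re_add_mul_sq_le_of_norm_sub_le {f : ℂ → ℂ} {A : ℂ} {K x : ℝ}
    (h : ‖f x - f 0 - A * x ^ 2‖ ≤ K * ‖(x : ℂ)‖ ^ 3) :
    (f 0).re + (A.re - K * |x|) * x ^ 2 ≤ (f x).re := by
  have hre := Complex.abs_re_le_norm (f x - f 0 - A * x ^ 2)
  rw [abs_le] at hre
  have : (f x - f 0 - A * x ^ 2).re = (f x).re - (f 0).re - A.re * x ^ 2 := by
    simp [← Complex.ofReal_pow]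
  have hx : ‖(x : ℂ)‖ ^ 3 = |x| * x ^ 2 := by
    rw [Complex.norm_real, Real.norm_eq_abs, pow_succ, sq_abs, mul_comm]
  rw [hx] at h
  nlinarith

theorem eq_dslope_dslope_mul_sq_sub_sq {f : ℂ → ℂ} {e : ℂ} (he : e ≠ 0) (hfe : f e = 0)
    (hfe' : f (-e) = 0) (z : ℂ) : f z = dslope (dslope f e) (-e) z * (z ^ 2 - e ^ 2) := by
  have hk : dslope f e (-e) = 0 := by
    rw [dslope_of_ne _ (neg_ne_self.2 he), slope_def_field, hfe, hfe', sub_self, zero_div]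
  have h1 := sub_smul_dslope f e z
  have h2 := sub_smul_dslope (dslope f e) (-e) z
  rw [smul_eq_mul] at h1 h2
  linear_combination -h1 - (z - e) * h2 + hfe + (z - e) * hk

theorem norm_sub_le_of_eq_mul_sq_sub_sq {f m : ℂ → ℂ} {A e : ℂ} {K r : ℝ} (hr : 0 < r)
    (hm : DifferentiableOn ℂ m (closedBall 0 r)) (hfac : ∀ z, f z = m z * (z ^ 2 - e ^ 2))
    (htaylor : ∀ z ∈ closedBall (0 : ℂ) r, ‖f z - f 0 - A * z ^ 2‖ ≤ K * ‖z‖ ^ 3)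
    (her : 2 * ‖e‖ ≤ r) : ∀ z ∈ closedBall (0 : ℂ) r, ‖m z - A‖ ≤ 3 / 2 * K * r := by
  have he : e ∈ closedBall (0 : ℂ) r := mem_closedBall_zero_iff.2 (by linarith [norm_nonneg e])
  have hsphere : ∀ w ∈ sphere (0 : ℂ) r, ‖m w - A‖ ≤ 3 / 2 * K * r := by
    intro w hw
    rw [mem_sphere_zero_iff_norm] at hw
    have hden : 3 / 4 * r ^ 2 ≤ ‖w ^ 2 - e ^ 2‖ := by
      have := norm_sub_norm_le (w ^ 2) (e ^ 2)
      rw [norm_pow, norm_pow, hw] at this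
      nlinarith [norm_nonneg e]
    have hden0 : w ^ 2 - e ^ 2 ≠ 0 := norm_pos_iff.1 (by nlinarith)
    -- `f e = 0`, so the Taylor remainders at `w` and at `e` differ by `(m w - A) (w² - e²)`.
    have hnum : (m w - A) * (w ^ 2 - e ^ 2) =
        (f w - f 0 - A * w ^ 2) - (f e - f 0 - A * e ^ 2) := by
      rw [hfac w, hfac e]; ring
    have hw' : ‖f w - f 0 - A * w ^ 2‖ ≤ K * r ^ 3 := by
      simpa [hw] using htaylor w (by simp [hw])
    have he' := htaylor e he
    have hK : 0 ≤ K := by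
      nlinarith [norm_nonneg (f w - f 0 - A * w ^ 2), pow_pos hr 3]
    have hnum_le : ‖(m w - A) * (w ^ 2 - e ^ 2)‖ ≤ 9 / 8 * K * r ^ 3 := by
      rw [hnum]
      refine (norm_sub_le _ _).trans ?_
      have : ‖e‖ ^ 3 ≤ (r / 2) ^ 3 := pow_le_pow_left₀ (norm_nonneg e) (by linarith) 3
      nlinarith
    rw [norm_mul] at hnum_le
    have : ‖m w - A‖ * (3 / 4 * r ^ 2) ≤ 3 / 2 * K * r * (3 / 4 * r ^ 2) := by
      nlinarith [norm_nonneg (m w - A)]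
    exact le_of_mul_le_mul_right this (by positivity)
  intro z hz
  refine Complex.norm_le_of_forall_mem_frontier_norm_le isBounded_ball
    ((hm.sub_const A).mono ?_).diffContOnCl (by rwa [frontier_ball 0 hr.ne']) ?_
  · rw [closure_ball 0 hr.ne']
  · rwa [closure_ball 0 hr.ne']

theorem im_deriv_eq_zero {f : ℂ → ℂ} {r c : ℝ} (hre : ∀ t : ℝ, |t| < r → (f t).im = 0)
    (hf : DifferentiableAt ℂ f c) (hc : |c| < r) : (deriv f c).im = 0 := by
  have hderiv : HasDerivAt (fun t : ℝ => (f t).im) (deriv f c).im c :=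
    Complex.imCLM.hasFDerivAt.comp_hasDerivAt c hf.hasDerivAt.comp_ofReal
  have hzero : (fun t : ℝ => (f t).im) =ᶠ[𝓝 c] fun _ => 0 :=
    (isOpen_lt continuous_abs continuous_const).eventually_mem hc |>.mono hre
  exact hderiv.unique ((hasDerivAt_const c 0).congr_of_eventuallyEq hzero)

theorem im_dslope_eq_zero {f : ℂ → ℂ} {r c x : ℝ} (hre : ∀ t : ℝ, |t| < r → (f t).im = 0)
    (hf : DifferentiableAt ℂ f c) (hc : |c| < r) (hx : |x| < r) : (dslope f c x).im = 0 := by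
  rcases eq_or_ne x c with rfl | hxc
  · rw [dslope_same]; exact im_deriv_eq_zero hre hf hc
  · rw [dslope_of_ne _ (Complex.ofReal_injective.ne hxc), slope_def_field, ← Complex.ofReal_sub,
      Complex.div_ofReal_im, Complex.sub_im, hre x hx, hre c hc, sub_zero, zero_div]

theorem deriv_mul_sq_sub_sq {m : ℂ → ℂ} {a e : ℂ} (hm : DifferentiableAt ℂ m a)
    (ha : a ^ 2 = e ^ 2) : deriv (fun z => m z * (z ^ 2 - e ^ 2)) a = 2 * a * m a := by
  have := hm.hasDerivAt.fun_mul ((hasDerivAt_pow 2 a).sub_const (e ^ 2))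
  rw [this.deriv, ha]
  push_cast; ring

theorem exists_eq_mul_sq_sub_sq_of_norm_taylor_le {h : ℂ → ℂ} {A : ℂ} {ρ K e : ℝ}
    (hd : DifferentiableOn ℂ h (ball 0 1)) (hre : ∀ x : ℝ, |x| < 1 → (h x).im = 0)
    (hρ : ρ < 1) (he : 0 < e) (heρ : 2 * e ≤ ρ) (hhe : h e = 0) (hhe' : h (-e) = 0)
    (htaylor : ∀ z ∈ closedBall (0 : ℂ) ρ, ‖h z - h 0 - A * z ^ 2‖ ≤ K * ‖z‖ ^ 3)
    (hA : 3 / 2 * K * ρ < A.re) :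
    ∃ m : ℂ → ℂ, DifferentiableOn ℂ m (ball 0 ρ) ∧
      (∀ x : ℝ, |x| < ρ → (m x).im = 0 ∧ 0 < (m x).re) ∧
      (∀ z ∈ ball (0 : ℂ) ρ, h z = m z * (z ^ 2 - (e : ℂ) ^ 2)) ∧
      (∀ z ∈ ball (0 : ℂ) ρ, h z = 0 ↔ z = e ∨ z = -e) ∧
      deriv h e ≠ 0 ∧ deriv h (-e) ≠ 0 := by
  have hρ1 : ball (0 : ℂ) ρ ⊆ ball 0 1 := ball_subset_ball hρ.le
  have he1 : |e| < 1 := by rw [abs_of_pos he]; linarith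
  have he1' : |-e| < 1 := by rwa [abs_neg]
  have he0 : (e : ℂ) ≠ 0 := Complex.ofReal_ne_zero.2 he.ne'
  have heρ' : (e : ℂ) ∈ ball (0 : ℂ) ρ := by simp [abs_of_pos he]; linarith
  have heρ'' : -(e : ℂ) ∈ ball (0 : ℂ) ρ := by simpa using heρ'
  set k := dslope h e
  set m := dslope k (-e)
  have hfac := eq_dslope_dslope_mul_sq_sub_sq he0 hhe hhe'
  have hk : DifferentiableOn ℂ k (ball 0 1) :=
    (Complex.differentiableOn_dslope (isOpen_ball.mem_nhds (hρ1 heρ'))).2 hd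
  have hm : DifferentiableOn ℂ m (ball 0 1) :=
    (Complex.differentiableOn_dslope (isOpen_ball.mem_nhds (hρ1 heρ''))).2 hk
  have hmA := norm_sub_le_of_eq_mul_sq_sub_sq (by linarith) (hm.mono (closedBall_subset_ball hρ))
    hfac htaylor (by simpa [abs_of_pos he] using heρ)
  have hm0 : ∀ z ∈ ball (0 : ℂ) ρ, m z ≠ 0 := fun z hz hmz => by
    have := hmA z (ball_subset_closedBall hz)
    rw [hmz, zero_sub, norm_neg] at this
    linarith [Complex.re_le_norm A]
  have hderiv : ∀ a ∈ ball (0 : ℂ) ρ, a ^ 2 = (e : ℂ) ^ 2 → a ≠ 0 → deriv h a ≠ 0 := by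
    intro a ha ha2 ha0
    rw [show h = fun z => m z * (z ^ 2 - (e : ℂ) ^ 2) from funext hfac,
      deriv_mul_sq_sub_sq (hm.differentiableAt (isOpen_ball.mem_nhds (hρ1 ha))) ha2]
    exact mul_ne_zero (mul_ne_zero two_ne_zero ha0) (hm0 a ha)
  refine ⟨m, hm.mono hρ1, fun x hx => ⟨?_, ?_⟩, fun z _ => hfac z, fun z hz => ?_,
    hderiv _ heρ' rfl he0, hderiv _ heρ'' (neg_sq _) (neg_ne_zero.2 he0)⟩
  · have hk_re : ∀ t : ℝ, |t| < 1 → (k t).im = 0 := fun t ht =>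
      im_dslope_eq_zero hre (hd.differentiableAt (isOpen_ball.mem_nhds (hρ1 heρ'))) he1 ht
    have := im_dslope_eq_zero hk_re
      (hk.differentiableAt (isOpen_ball.mem_nhds (by simpa using hρ1 heρ''))) he1' (x := x)
      (by linarith)
    rwa [Complex.ofReal_neg] at this
  · have := hmA x (by simpa using hx.le)
    have := Complex.abs_re_le_norm (m x - A)
    rw [Complex.sub_re, abs_le] at this
    linarith
  · rw [hfac z, mul_eq_zero, sub_eq_zero, sq_eq_sq_iff_eq_or_eq_neg, or_iff_right (hm0 z hz)]

/-- For every `M ≥ δ > 0` there are `ρ ∈ (0,1)`, `c₀ > 0`, `C > 0`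
(depending only on `M, δ`) such that any `h` holomorphic on the unit disc, even,
real-valued on `(−1,1)`, bounded by `M`, with `h″(0) ≥ δ` and `−c₀ < h(0) < 0`,
factors as `h(ε) = m(ε)·(ε² − ε_c²)` on `D(0,ρ)` with `ε_c ∈ (0,ρ)` real,
`ε_c² ≤ C·|h(0)|`, and `m` holomorphic on `D(0,ρ)`, real and strictly positive on
`(−ρ,ρ)`; in particular the only zeros of `h` in `D(0,ρ)` are the two simple real
zeros `±ε_c`. -/
theorem stmt_2 (M δ : ℝ) (hδ : 0 < δ) (hMδ : δ ≤ M) :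
    ∃ ρ c₀ C : ℝ, 0 < ρ ∧ ρ < 1 ∧ 0 < c₀ ∧ 0 < C ∧
      ∀ h : ℂ → ℂ,
        DifferentiableOn ℂ h (Metric.ball 0 1) →
        (∀ z ∈ Metric.ball (0:ℂ) 1, h (-z) = h z) →
        (∀ x : ℝ, |x| < 1 → (h (x:ℂ)).im = 0) →
        (∀ z ∈ Metric.ball (0:ℂ) 1, ‖h z‖ ≤ M) →
        δ ≤ (deriv (deriv h) 0).re →
        -c₀ < (h 0).re → (h 0).re < 0 →
        ∃ εc : ℝ, 0 < εc ∧ εc < ρ ∧ εc ^ 2 ≤ C * ‖h 0‖ ∧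
          ∃ m : ℂ → ℂ, DifferentiableOn ℂ m (Metric.ball 0 ρ) ∧
            (∀ x : ℝ, |x| < ρ → (m (x:ℂ)).im = 0 ∧ 0 < (m (x:ℂ)).re) ∧
            (∀ z ∈ Metric.ball (0:ℂ) ρ, h z = m z * (z ^ 2 - (εc:ℂ) ^ 2)) ∧
            (∀ z ∈ Metric.ball (0:ℂ) ρ, h z = 0 ↔ z = (εc:ℂ) ∨ z = -(εc:ℂ)) ∧
            deriv h (εc:ℂ) ≠ 0 ∧ deriv h (-(εc:ℂ)) ≠ 0 := by
  have hM : 0 < M := hδ.trans_le hMδ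
  set ρ := δ / (3072 * M) with hρ_def
  have hKρ : 384 * M * ρ = δ / 8 := by rw [hρ_def]; field_simp; ring
  have hρ : ρ ≤ 1 / 3072 := by nlinarith
  have hρ0 : 0 < ρ := by positivity
  refine ⟨ρ, δ / 4 * (ρ / 4) ^ 2, 4 / δ, hρ0, by linarith, by positivity, by positivity, ?_⟩
  intro h hd heven hre hbound hsnd hlow hneg
  have hh1 : deriv h 0 = 0 :=
    deriv_eq_zero_of_even (Filter.eventually_of_mem (ball_mem_nhds 0 one_pos) heven)
  have htaylor : ∀ z ∈ closedBall (0 : ℂ) ρ,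
      ‖h z - h 0 - deriv (deriv h) 0 / 2 * z ^ 2‖ ≤ 384 * M * ‖z‖ ^ 3 := fun z hz => by
    simpa [hh1] using norm_sub_taylor_two_le hd hbound
      (closedBall_subset_closedBall (by linarith) hz)
  have hquad : ∀ x ∈ Icc 0 (ρ / 4), (h 0).re + δ / 4 * x ^ 2 ≤ (h x).re := fun x hx => by
    have hx' : 384 * M * |x| ≤ δ / 32 := by rw [abs_of_nonneg hx.1]; nlinarith [hx.2]
    have := re_add_mul_sq_le_of_norm_sub_le
      (htaylor x (by simp [abs_of_nonneg hx.1]; linarith [hx.2]))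
    simp only [Complex.div_ofNat_re] at this
    nlinarith [sq_nonneg x]
  obtain ⟨e, ⟨he0, heρ⟩, hroot, hsq⟩ := exists_mem_Ioo_eq_zero_of_quadratic_lower_bound
    (F := fun x : ℝ => (h x).re) (by positivity)
    (Complex.continuous_re.comp_continuousOn (hd.continuousOn.comp
      Complex.continuous_ofReal.continuousOn fun x hx => by
        simp [abs_of_nonneg hx.1]; linarith [hx.2]))
    hquad (by simpa using hneg) (by simp; linarith)
  have hh0 : ‖h 0‖ = -(h 0).re := by
    rw [← Complex.abs_re_eq_norm.2 (by simpa using hre 0 (by simp)), abs_of_neg hneg]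
  have hhe : h e = 0 := Complex.ext hroot (hre e (by rw [abs_of_pos he0]; linarith))
  obtain ⟨m, hm⟩ := exists_eq_mul_sq_sub_sq_of_norm_taylor_le hd hre (by linarith) he0
    (by linarith) hhe (by rw [heven _ (by simp [abs_of_pos he0]; linarith), hhe]) htaylor
    (by simp only [Complex.div_ofNat_re]; linarith)
  refine ⟨e, he0, by linarith, ?_, m, hm⟩
  rw [Complex.ofReal_zero] at hsq
  rw [hh0, div_mul_eq_mul_div, le_div_iff₀ hδ]
  linarith
end

section
/- Let m₀ > 0, a ∈ ℝ, E ∈ ℂ, C₀ > 0, and let V ∈ C^∞([a,∞), ℂ) satisfy: for every k ∈ ℕ there is C_k > 0 with |V^{(k)}(x)| ≤ C_k ⟨x⟩^{m₀−k} for all x ≥ a, and |V(x) − E| ≥ ⟨x⟩^{m₀}/C₀ for all x ≥ a. Let ψ ∈ C^∞([a,∞), ℂ) satisfy ψ(x)² = V(x) − E for all x ≥ a. Then there are constants c, C > 0 with c⟨x⟩^{m₀/2} ≤ |ψ(x)| ≤ C⟨x⟩^{m₀/2} for all x ≥ a, and for every k ≥ 1 there is C′_k > 0 with |ψ^{(k)}(x)|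 ≤ C′_k ⟨x⟩^{m₀/2−k} for all x ≥ a. -/
open Set Finset

private lemma comb_id {R : Type*} [CommRing R] (F G : ℕ → R) (n : ℕ) :
    ∑ i ∈ Finset.range (n+2), ((n+1).choose i : R) * (F i * G (n+1-i))
      = ∑ i ∈ Finset.range (n+1), (n.choose i : R) * (F (i+1) * G (n-i))
        + ∑ i ∈ Finset.range (n+1), (n.choose i : R) * (F i * G (n+1-i)) := by
  rw [Finset.sum_range_succ' (fun i => ((n+1).choose i : R) * (F i * G (n+1-i))) (n+1)]
  have h1 : ∀ i ∈ Finset.range (n+1),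
      (((n+1).choose (i+1) : R)) * (F (i+1) * G (n+1-(i+1)))
        = (n.choose i : R) * (F (i+1) * G (n-i)) + (n.choose (i+1) : R) * (F (i+1) * G (n-i)) := by
    intro i hi
    have h : n + 1 - (i+1) = n - i := by omega
    rw [h, Nat.choose_succ_succ]
    push_cast
    ring
  rw [Finset.sum_congr rfl h1, Finset.sum_add_distrib]
  have h2 : (∑ i ∈ Finset.range (n+1), (n.choose (i+1) : R) * (F (i+1) * G (n-i)))
      + ((n+1).choose 0 : R) * (F 0 * G (n+1-0))
      = ∑ i ∈ Finset.range (n+1), (n.choose i : R) * (F i * G (n+1-i)) := by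
    rw [Finset.sum_range_succ' (fun i => (n.choose i : R) * (F i * G (n+1-i))) n]
    congr 1
    · rw [Finset.sum_range_succ]
      simp only [Nat.choose_succ_self, Nat.cast_zero, zero_mul, add_zero]
      refine Finset.sum_congr rfl fun i hi => ?_
      have h : n + 1 - (i+1) = n - i := by omega
      rw [h]
    · simp
  rw [add_assoc, h2]

private lemma leibniz_within {a : ℝ} (f g : ℝ → ℂ)
    (hf : ContDiffOn ℝ (⊤ : ℕ∞) f (Set.Ici a)) (hg : ContDiffOn ℝ (⊤ : ℕ∞) g (Set.Ici a)) :
    ∀ (n : ℕ), ∀ x ∈ Set.Ici a,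
      iteratedDerivWithin n (fun y => f y * g y) (Set.Ici a) x
        = ∑ i ∈ Finset.range (n+1), ((n.choose i : ℂ))
            * (iteratedDerivWithin i f (Set.Ici a) x
               * iteratedDerivWithin (n - i) g (Set.Ici a) x) := by
  have hs : UniqueDiffOn ℝ (Set.Ici a) := uniqueDiffOn_Ici a
  intro n
  induction n with
  | zero => intro x hx; simp
  | succ n ih =>
    intro x hx
    have hF : ∀ (m : ℕ), HasDerivWithinAt (iteratedDerivWithin m f (Set.Ici a))
        (iteratedDerivWithin (m+1) f (Set.Ici a) x) (Set.Ici a) x := by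
      intro m
      have hd := (hf.differentiableOn_iteratedDerivWithin
        (show ((m : ℕ) : WithTop ℕ∞) < ((⊤ : ℕ∞) : WithTop ℕ∞) by exact_mod_cast ENat.coe_lt_top m) hs) x hx
      have := hd.hasDerivWithinAt
      rwa [← iteratedDerivWithin_succ] at this
    have hG : ∀ (m : ℕ), HasDerivWithinAt (iteratedDerivWithin m g (Set.Ici a))
        (iteratedDerivWithin (m+1) g (Set.Ici a) x) (Set.Ici a) x := by
      intro m
      have hd := (hg.differentiableOn_iteratedDerivWithin
        (show ((m : ℕ) : WithTop ℕ∞) < ((⊤ : ℕ∞) : WithTop ℕ∞) by exact_mod_cast ENat.coe_lt_top m) hs) x hx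
      have := hd.hasDerivWithinAt
      rwa [← iteratedDerivWithin_succ] at this
    rw [iteratedDerivWithin_succ]
    rw [derivWithin_congr (fun y hy => ih y hy) (ih x hx)]
    have hsum : HasDerivWithinAt
        (fun y => ∑ i ∈ Finset.range (n+1), ((n.choose i : ℂ))
            * (iteratedDerivWithin i f (Set.Ici a) y
               * iteratedDerivWithin (n - i) g (Set.Ici a) y))
        (∑ i ∈ Finset.range (n+1), ((n.choose i : ℂ))
            * (iteratedDerivWithin (i+1) f (Set.Ici a) x
                 * iteratedDerivWithin (n - i) g (Set.Ici a) x
               + iteratedDerivWithin i f (Set.Ici a) x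
                 * iteratedDerivWithin (n - i + 1) g (Set.Ici a) x))
        (Set.Ici a) x := by
      apply HasDerivWithinAt.fun_sum
      intro i hi
      exact ((hF i).mul (hG (n - i))).const_mul _
    rw [hsum.derivWithin (hs x hx)]
    have hrw : ∀ i ∈ Finset.range (n+1),
        ((n.choose i : ℂ)) * (iteratedDerivWithin (i+1) f (Set.Ici a) x
                 * iteratedDerivWithin (n - i) g (Set.Ici a) x
               + iteratedDerivWithin i f (Set.Ici a) x
                 * iteratedDerivWithin (n - i + 1) g (Set.Ici a) x)
        = ((n.choose i : ℂ)) * (iteratedDerivWithin (i+1) f (Set.Ici a) x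
                 * iteratedDerivWithin (n - i) g (Set.Ici a) x)
          + ((n.choose i : ℂ)) * (iteratedDerivWithin i f (Set.Ici a) x
                 * iteratedDerivWithin (n + 1 - i) g (Set.Ici a) x) := by
      intro i hi
      have h : n - i + 1 = n + 1 - i := by
        simp only [Finset.mem_range] at hi; omega
      rw [h, mul_add]
    rw [Finset.sum_congr rfl hrw, Finset.sum_add_distrib]
    exact (comb_id (fun i => iteratedDerivWithin i f (Set.Ici a) x)
      (fun i => iteratedDerivWithin i g (Set.Ici a) x) n).symm

/-- symbol bounds for a smooth branch `ψ` of `(V − E)^{1/2}` on a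
half-line where the potential `V` satisfies the growth assumption (A2):
`|V^{(k)}(x)| ≤ C_k⟨x⟩^{m₀−k}` and the ellipticity bound `|V − E| ≥ ⟨x⟩^{m₀}/C₀`,
with `⟨x⟩ = (1+x²)^{1/2}`. Then `|ψ| ≍ ⟨x⟩^{m₀/2}` and
`|ψ^{(k)}| ≲ ⟨x⟩^{m₀/2−k}` for `k ≥ 1`. -/
theorem stmt_6 (m₀ a : ℝ) (hm₀ : 0 < m₀) (E : ℂ) (C₀ : ℝ) (hC₀ : 0 < C₀)
    (V ψ : ℝ → ℂ)
    (hV : ContDiffOn ℝ (⊤ : ℕ∞) V (Set.Ici a))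
    (hVb : ∀ k : ℕ, ∃ C > (0:ℝ), ∀ x ≥ a,
      ‖iteratedDerivWithin k V (Set.Ici a) x‖
        ≤ C * Real.sqrt (1 + x^2) ^ (m₀ - (k:ℝ)))
    (hell : ∀ x ≥ a, Real.sqrt (1 + x^2) ^ m₀ / C₀ ≤ ‖V x - E‖)
    (hψ : ContDiffOn ℝ (⊤ : ℕ∞) ψ (Set.Ici a))
    (hψsq : ∀ x ≥ a, (ψ x)^2 = V x - E) :
    (∃ c > (0:ℝ), ∃ C > (0:ℝ), ∀ x ≥ a,
        c * Real.sqrt (1 + x^2) ^ (m₀/2) ≤ ‖ψ x‖ ∧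
        ‖ψ x‖ ≤ C * Real.sqrt (1 + x^2) ^ (m₀/2)) ∧
    (∀ k : ℕ, 1 ≤ k → ∃ C > (0:ℝ), ∀ x ≥ a,
        ‖iteratedDerivWithin k ψ (Set.Ici a) x‖
          ≤ C * Real.sqrt (1 + x^2) ^ (m₀/2 - (k:ℝ))) := by
  have hs : UniqueDiffOn ℝ (Set.Ici a) := uniqueDiffOn_Ici a
  set t : ℝ → ℝ := fun x => Real.sqrt (1 + x^2) with ht_def
  have htpos : ∀ x : ℝ, 0 < t x := fun x =>
    Real.sqrt_pos.mpr (by positivity)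
  have ht1 : ∀ x : ℝ, 1 ≤ t x := by
    intro x
    have h := Real.sqrt_le_sqrt (show (1:ℝ) ≤ 1 + x^2 by nlinarith [sq_nonneg x])
    rwa [Real.sqrt_one] at h
  -- norm of ψ
  have hnormψ : ∀ x ≥ a, ‖ψ x‖ = Real.sqrt ‖V x - E‖ := by
    intro x hx
    rw [← hψsq x hx, norm_pow, Real.sqrt_sq (norm_nonneg _)]
  have hhalf : ∀ x : ℝ, t x ^ (m₀/2) = Real.sqrt (t x ^ m₀) := by
    intro x
    rw [show m₀/2 = m₀ * (1/2) by ring, Real.rpow_mul (le_of_lt (htpos x)),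
      Real.sqrt_eq_rpow]
  -- lower bound
  set c : ℝ := (Real.sqrt C₀)⁻¹ with hc_def
  have hcpos : 0 < c := inv_pos.mpr (Real.sqrt_pos.mpr hC₀)
  have hlow : ∀ x ≥ a, c * t x ^ (m₀/2) ≤ ‖ψ x‖ := by
    intro x hx
    rw [hnormψ x hx, hhalf x]
    have h1 : c * Real.sqrt (t x ^ m₀) = Real.sqrt (t x ^ m₀ / C₀) := by
      rw [Real.sqrt_div (by positivity), hc_def, inv_mul_eq_div]
    rw [h1]
    exact Real.sqrt_le_sqrt (hell x hx)
  -- upper bound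
  obtain ⟨C0', hC0'pos, hC0'⟩ := hVb 0
  set Cu : ℝ := Real.sqrt (C0' + ‖E‖) with hCu_def
  have hCupos : 0 < Cu := Real.sqrt_pos.mpr (by positivity)
  have hup : ∀ x ≥ a, ‖ψ x‖ ≤ Cu * t x ^ (m₀/2) := by
    intro x hx
    have hV0 : ‖V x‖ ≤ C0' * t x ^ m₀ := by
      have := hC0' x hx
      simpa using this
    have hE1 : ‖E‖ ≤ ‖E‖ * t x ^ m₀ := by
      have h1 : (1:ℝ) ≤ t x ^ m₀ := Real.one_le_rpow (ht1 x) (le_of_lt hm₀)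
      nlinarith [norm_nonneg E]
    have hVE : ‖V x - E‖ ≤ (C0' + ‖E‖) * t x ^ m₀ := by
      calc ‖V x - E‖ ≤ ‖V x‖ + ‖E‖ := norm_sub_le _ _
        _ ≤ C0' * t x ^ m₀ + ‖E‖ * t x ^ m₀ := by linarith
        _ = (C0' + ‖E‖) * t x ^ m₀ := by ring
    rw [hnormψ x hx, hhalf x]
    calc Real.sqrt ‖V x - E‖ ≤ Real.sqrt ((C0' + ‖E‖) * t x ^ m₀) :=
          Real.sqrt_le_sqrt hVE
      _ = Cu * Real.sqrt (t x ^ m₀) := Real.sqrt_mul (by positivity) _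
  -- iterated derivative bounds, uniform in j ≤ k
  have key : ∀ k : ℕ, ∃ C > (0:ℝ), ∀ j ≤ k, ∀ x ≥ a,
      ‖iteratedDerivWithin j ψ (Set.Ici a) x‖ ≤ C * t x ^ (m₀/2 - (j:ℝ)) := by
    intro k
    induction k with
    | zero =>
      refine ⟨Cu, hCupos, fun j hj x hx => ?_⟩
      obtain rfl := Nat.le_zero.mp hj
      simpa using hup x hx
    | succ k ihk =>
      obtain ⟨Ck, hCkpos, hCk⟩ := ihk
      obtain ⟨B, hBpos, hB⟩ := hVb (k+1)
      set S : ℝ := ∑ i ∈ Finset.range k, (((k+1).choose (i+1) : ℕ) : ℝ) with hS_def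
      have hSnn : 0 ≤ S := Finset.sum_nonneg fun i _ => by positivity
      set C' : ℝ := (B + S * Ck^2) / (2 * c) with hC'_def
      have hC'pos : 0 < C' := by
        apply div_pos (by nlinarith) (by linarith)
      refine ⟨max Ck C', lt_of_lt_of_le hCkpos (le_max_left _ _), fun j hj x hx => ?_⟩
      rcases Nat.lt_or_ge j (k+1) with hjk | hjk
      · calc ‖iteratedDerivWithin j ψ (Set.Ici a) x‖
            ≤ Ck * t x ^ (m₀/2 - (j:ℝ)) := hCk j (by omega) x hx
          _ ≤ max Ck C' * t x ^ (m₀/2 - (j:ℝ)) := by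
              apply mul_le_mul_of_nonneg_right (le_max_left _ _)
              positivity
      · have hj' : j = k + 1 := by omega
        subst hj'
        -- main computation
        have hxi : x ∈ Set.Ici a := hx
        set D : ℂ := iteratedDerivWithin (k+1) ψ (Set.Ici a) x with hD_def
        have hLeib := leibniz_within ψ ψ hψ hψ (k+1) x hx
        have hVeq : iteratedDerivWithin (k+1) (fun y => ψ y * ψ y) (Set.Ici a) x
            = iteratedDerivWithin (k+1) V (Set.Ici a) x := by
          have h1 : Set.EqOn (fun y => ψ y * ψ y) (fun y => (-E) + V y) (Set.Ici a) := by
            intro y hy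
            have h2 := hψsq y hy
            rw [sq] at h2
            simp only
            rw [h2]; ring
          rw [iteratedDerivWithin_congr h1 hxi,
            iteratedDerivWithin_const_add (Nat.succ_pos k) (-E)]
        have hkey : ∑ i ∈ Finset.range (k+2), (((k+1).choose i : ℕ) : ℂ)
              * (iteratedDerivWithin i ψ (Set.Ici a) x
                 * iteratedDerivWithin (k+1-i) ψ (Set.Ici a) x)
            = iteratedDerivWithin (k+1) V (Set.Ici a) x := by
          rw [← hLeib, hVeq]
        rw [Finset.sum_range_succ, Finset.sum_range_succ'] at hkey
        simp only [Nat.choose_zero_right, Nat.choose_self, Nat.cast_one, one_mul,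
          Nat.sub_self, Nat.sub_zero, iteratedDerivWithin_zero] at hkey
        set R : ℂ := ∑ i ∈ Finset.range k, (((k+1).choose (i+1) : ℕ) : ℂ)
              * (iteratedDerivWithin (i+1) ψ (Set.Ici a) x
                 * iteratedDerivWithin (k+1-(i+1)) ψ (Set.Ici a) x) with hR_def
        have h2 : (2:ℂ) * (ψ x * D) = iteratedDerivWithin (k+1) V (Set.Ici a) x - R := by
          rw [hR_def]
          linear_combination hkey
        -- bound R
        have hRb : ‖R‖ ≤ S * Ck^2 * t x ^ (m₀ - ((k:ℝ)+1)) := by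
          calc ‖R‖ ≤ ∑ i ∈ Finset.range k, ‖(((k+1).choose (i+1) : ℕ) : ℂ)
              * (iteratedDerivWithin (i+1) ψ (Set.Ici a) x
                 * iteratedDerivWithin (k+1-(i+1)) ψ (Set.Ici a) x)‖ :=
              norm_sum_le _ _
            _ ≤ ∑ i ∈ Finset.range k, (((k+1).choose (i+1) : ℕ) : ℝ)
                * (Ck^2 * t x ^ (m₀ - ((k:ℝ)+1))) := by
              apply Finset.sum_le_sum
              intro i hi
              rw [Finset.mem_range] at hi
              rw [norm_mul, norm_mul]
              have hcast : ‖(((k+1).choose (i+1) : ℕ) : ℂ)‖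
                  = (((k+1).choose (i+1) : ℕ) : ℝ) := by
                simp
              rw [hcast]
              apply mul_le_mul_of_nonneg_left _ (by positivity)
              have hb1 := hCk (i+1) (by omega) x hx
              have hkk : k+1-(i+1) = k - i := by omega
              have hb2 := hCk (k-i) (by omega) x hx
              rw [hkk]
              calc ‖iteratedDerivWithin (i+1) ψ (Set.Ici a) x‖
                    * ‖iteratedDerivWithin (k-i) ψ (Set.Ici a) x‖
                  ≤ (Ck * t x ^ (m₀/2 - ((i+1:ℕ):ℝ)))
                    * (Ck * t x ^ (m₀/2 - ((k-i:ℕ):ℝ))) := by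
                    apply mul_le_mul hb1 hb2 (norm_nonneg _) (by positivity)
                _ = Ck^2 * (t x ^ (m₀/2 - ((i+1:ℕ):ℝ)) * t x ^ (m₀/2 - ((k-i:ℕ):ℝ))) := by
                    ring
                _ = Ck^2 * t x ^ (m₀ - ((k:ℝ)+1)) := by
                    rw [← Real.rpow_add (htpos x)]
                    congr 1
                    have hci : ((i+1:ℕ):ℝ) = (i:ℝ) + 1 := by push_cast; ring
                    have hcki : ((k-i:ℕ):ℝ) = (k:ℝ) - (i:ℝ) := by
                      rw [Nat.cast_sub (by omega)]
                    rw [hci, hcki]; ring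
            _ = S * Ck^2 * t x ^ (m₀ - ((k:ℝ)+1)) := by
              rw [hS_def, Finset.sum_mul, Finset.sum_mul]
              apply Finset.sum_congr rfl
              intro i hi
              ring
        -- bound the numerator
        have hBx : ‖iteratedDerivWithin (k+1) V (Set.Ici a) x‖
            ≤ B * t x ^ (m₀ - ((k:ℝ)+1)) := by
          have := hB x hx
          have hc : ((k+1:ℕ):ℝ) = (k:ℝ) + 1 := by push_cast; ring
          rwa [hc] at this
        have hnum : ‖iteratedDerivWithin (k+1) V (Set.Ici a) x - R‖
            ≤ (B + S * Ck^2) * t x ^ (m₀ - ((k:ℝ)+1)) := by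
          calc ‖iteratedDerivWithin (k+1) V (Set.Ici a) x - R‖
              ≤ ‖iteratedDerivWithin (k+1) V (Set.Ici a) x‖ + ‖R‖ := norm_sub_le _ _
            _ ≤ B * t x ^ (m₀ - ((k:ℝ)+1)) + S * Ck^2 * t x ^ (m₀ - ((k:ℝ)+1)) := by
                linarith
            _ = (B + S * Ck^2) * t x ^ (m₀ - ((k:ℝ)+1)) := by ring
        -- combine
        have hnormD : 2 * ‖ψ x‖ * ‖D‖ = ‖iteratedDerivWithin (k+1) V (Set.Ici a) x - R‖ := by
          rw [← h2, norm_mul, norm_mul]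
          simp [mul_assoc]
        have hlowx := hlow x hx
        have hchain : 2 * (c * t x ^ (m₀/2)) * ‖D‖
            ≤ (B + S * Ck^2) * t x ^ (m₀ - ((k:ℝ)+1)) := by
          have h3 : 2 * (c * t x ^ (m₀/2)) * ‖D‖ ≤ 2 * ‖ψ x‖ * ‖D‖ := by
            apply mul_le_mul_of_nonneg_right _ (norm_nonneg _)
            linarith
          linarith [hnormD ▸ h3, hnum]
        have hdenpos : 0 < 2 * (c * t x ^ (m₀/2)) := by positivity
        have hDle : ‖D‖ ≤ (B + S * Ck^2) * t x ^ (m₀ - ((k:ℝ)+1))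
            / (2 * (c * t x ^ (m₀/2))) := by
          rw [le_div_iff₀ hdenpos]
          calc ‖D‖ * (2 * (c * t x ^ (m₀/2)))
              = 2 * (c * t x ^ (m₀/2)) * ‖D‖ := by ring
            _ ≤ _ := hchain
        have hfinal : (B + S * Ck^2) * t x ^ (m₀ - ((k:ℝ)+1))
            / (2 * (c * t x ^ (m₀/2))) = C' * t x ^ (m₀/2 - ((k:ℝ)+1)) := by
          have hre : m₀ - ((k:ℝ)+1) = (m₀/2 - ((k:ℝ)+1)) + m₀/2 := by ring
          rw [hre, Real.rpow_add (htpos x), hC'_def]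
          have h4 : (0:ℝ) < t x ^ (m₀/2) := by positivity
          field_simp
        have hcastj : ((k+1:ℕ):ℝ) = (k:ℝ) + 1 := by push_cast; ring
        calc ‖iteratedDerivWithin (k+1) ψ (Set.Ici a) x‖
            ≤ C' * t x ^ (m₀/2 - ((k:ℝ)+1)) := by
              rw [← hfinal]; exact hDle
          _ ≤ max Ck C' * t x ^ (m₀/2 - ((k+1:ℕ):ℝ)) := by
              rw [hcastj]
              apply mul_le_mul_of_nonneg_right (le_max_right _ _)
              positivity
  constructor
  · exact ⟨c, hcpos, Cu, hCupos, fun x hx => ⟨hlow x hx, hup x hx⟩⟩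
  · intro k hk
    obtain ⟨C, hCpos, hC⟩ := key k
    exact ⟨C, hCpos, fun x hx => hC k le_rfl x hx⟩
end

section
/- Let m₀ > 0, a ∈ ℝ, E ∈ ℂ, C₀ > 0, and let V ∈ C^∞([a,∞), ℂ) satisfy: for every k ∈ ℕ there is C_k > 0 with |V^{(k)}(x)| ≤ C_k ⟨x⟩^{m₀−k} for all x ≥ a, and |V(x) − E| ≥ ⟨x⟩^{m₀}/C₀ for all x ≥ a. Let ψ ∈ C^∞([a,∞), ℂ) satisfy ψ(x)² = V(x) − E, and let a₀ ∈ C^∞([a,∞), ℂ) be nonvanishing with a₀(x)² ψ(x) = 1 for all x ≥ a (so that a₀ is a smooth branch of ψ^{−1/2}, which automatically solves the leading transport equation ψa₀′ + (1/2)ψ′a₀ = 0). Then there are constants c, C > 0 with c⟨x⟩^{−m₀/4} ≤ |a₀(x)| ≤ C⟨x⟩^{−m₀/4} for all x ≥ a, and for every k ∈ ℕ there is C′_k > 0 with |a₀^{(k)}(x)| ≤ C′_k ⟨x⟩^{−m₀/4−k} for all x ≥ a. -/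
open Set

private lemma w_pos (x : ℝ) : 0 < Real.sqrt (1 + x^2) :=
  Real.sqrt_pos.2 (by nlinarith)

private lemma w_one_le (x : ℝ) : 1 ≤ Real.sqrt (1 + x^2) := by
  have h := Real.sqrt_le_sqrt (show (1:ℝ) ≤ 1 + x^2 by nlinarith)
  simpa using h

private lemma exists_boundFun {k : ℕ} {P : ℕ → ℝ → Prop}
    (h : ∀ j ≤ k, ∃ C > (0:ℝ), P j C) :
    ∃ Cf : ℕ → ℝ, ∀ j ≤ k, 0 < Cf j ∧ P j (Cf j) := by
  choose f hf hP using fun j (hj : j ≤ k) => h j hj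
  refine ⟨fun j => if hj : j ≤ k then f j hj else 1, fun j hj => ?_⟩
  simp only [dif_pos hj]
  exact ⟨hf j hj, hP j hj⟩

/-- Finite-order symbol bound predicate on `[a,∞)`. -/
def SymB (a m : ℝ) (k : ℕ) (f : ℝ → ℂ) : Prop :=
  ∀ j ≤ k, ∃ C > (0:ℝ), ∀ x ≥ a,
    ‖iteratedDerivWithin j f (Set.Ici a) x‖ ≤ C * Real.sqrt (1 + x^2) ^ (m - (j:ℝ))

private lemma SymB.mul {a m m' : ℝ} {k : ℕ} {f g : ℝ → ℂ}
    (hfc : ContDiffOn ℝ (⊤ : ℕ∞) f (Set.Ici a)) (hgc : ContDiffOn ℝ (⊤ : ℕ∞) g (Set.Ici a))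
    (hf : SymB a m k f) (hg : SymB a m' k g) :
    SymB a (m + m') k (fun x => f x * g x) := by
  obtain ⟨Cf, hCf⟩ := exists_boundFun hf
  obtain ⟨Cg, hCg⟩ := exists_boundFun hg
  intro n hn
  refine ⟨∑ i ∈ Finset.range (n+1), (n.choose i : ℝ) * Cf i * Cg (n - i), ?_, ?_⟩
  · refine Finset.sum_pos (fun i hi => ?_) ⟨0, by simp⟩
    have hi' : i ≤ n := Nat.lt_succ_iff.mp (Finset.mem_range.mp hi)
    have h1 : 0 < (n.choose i : ℝ) := by exact_mod_cast Nat.choose_pos hi'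
    exact mul_pos (mul_pos h1 (hCf i (hi'.trans hn)).1) (hCg (n - i) ((Nat.sub_le n i).trans hn)).1
  · intro x hx
    have hx' : x ∈ Set.Ici a := hx
    have hw0 := w_pos x
    have key : ‖iteratedDerivWithin n (fun x => f x * g x) (Set.Ici a) x‖ ≤
        ∑ i ∈ Finset.range (n+1), (n.choose i : ℝ) *
          ‖iteratedFDerivWithin ℝ i f (Set.Ici a) x‖ *
          ‖iteratedFDerivWithin ℝ (n - i) g (Set.Ici a) x‖ := by
      rw [← norm_iteratedFDerivWithin_eq_norm_iteratedDerivWithin]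
      exact norm_iteratedFDerivWithin_mul_le hfc hgc (uniqueDiffOn_Ici a) hx' (by exact_mod_cast le_top)
    refine key.trans ?_
    rw [Finset.sum_mul]
    refine Finset.sum_le_sum (fun i hi => ?_)
    have hi' : i ≤ n := Nat.lt_succ_iff.mp (Finset.mem_range.mp hi)
    have hbf := (hCf i (hi'.trans hn)).2 x hx
    have hbg := (hCg (n - i) ((Nat.sub_le n i).trans hn)).2 x hx
    rw [norm_iteratedFDerivWithin_eq_norm_iteratedDerivWithin,
        norm_iteratedFDerivWithin_eq_norm_iteratedDerivWithin]
    have hch : (0:ℝ) ≤ (n.choose i : ℝ) := by positivity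
    have hprod : (n.choose i : ℝ) * ‖iteratedDerivWithin i f (Set.Ici a) x‖ *
        ‖iteratedDerivWithin (n - i) g (Set.Ici a) x‖ ≤
        (n.choose i : ℝ) * (Cf i * Real.sqrt (1 + x^2) ^ (m - (i:ℝ))) *
        (Cg (n-i) * Real.sqrt (1 + x^2) ^ (m' - ((n-i:ℕ):ℝ))) := by
      have h1 : (n.choose i : ℝ) * ‖iteratedDerivWithin i f (Set.Ici a) x‖ ≤
          (n.choose i : ℝ) * (Cf i * Real.sqrt (1 + x^2) ^ (m - (i:ℝ))) :=
        mul_le_mul_of_nonneg_left hbf hch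
      refine mul_le_mul h1 hbg (norm_nonneg _) ?_
      exact mul_nonneg hch (mul_nonneg (hCf i (hi'.trans hn)).1.le
        (Real.rpow_nonneg (Real.sqrt_nonneg _) _))
    refine hprod.trans (le_of_eq ?_)
    have hcast : ((n - i : ℕ) : ℝ) = (n:ℝ) - (i:ℝ) := by
      rw [Nat.cast_sub hi']
    rw [hcast]
    have hexp : Real.sqrt (1 + x^2) ^ (m - (i:ℝ)) *
        Real.sqrt (1 + x^2) ^ (m' - ((n:ℝ) - (i:ℝ))) =
        Real.sqrt (1 + x^2) ^ (m + m' - (n:ℝ)) := by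
      rw [← Real.rpow_add hw0]; ring_nf
    rw [show (n.choose i : ℝ) * (Cf i * Real.sqrt (1 + x^2) ^ (m - (i:ℝ))) *
        (Cg (n-i) * Real.sqrt (1 + x^2) ^ (m' - ((n:ℝ) - (i:ℝ)))) =
        (n.choose i : ℝ) * Cf i * Cg (n-i) *
        (Real.sqrt (1 + x^2) ^ (m - (i:ℝ)) *
         Real.sqrt (1 + x^2) ^ (m' - ((n:ℝ) - (i:ℝ)))) from by ring, hexp]

/-- symbol bounds for the principal WKB amplitude `a₀ = ψ^{−1/2}`
(i.e. `a₀²ψ = 1`) where `ψ` is a smooth branch of `(V − E)^{1/2}` on a half-line,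
under the growth assumption (A2) on `V` and the ellipticity bound
`|V − E| ≥ ⟨x⟩^{m₀}/C₀`, with `⟨x⟩ = (1+x²)^{1/2}`. Then `|a₀| ≍ ⟨x⟩^{−m₀/4}`
and `|a₀^{(k)}| ≲ ⟨x⟩^{−m₀/4−k}` for all `k`. -/
theorem stmt_7 (m₀ a : ℝ) (hm₀ : 0 < m₀) (E : ℂ) (C₀ : ℝ) (hC₀ : 0 < C₀)
    (V ψ a₀ : ℝ → ℂ)
    (hV : ContDiffOn ℝ (⊤ : ℕ∞) V (Set.Ici a))
    (hVb : ∀ k : ℕ, ∃ C > (0:ℝ), ∀ x ≥ a,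
      ‖iteratedDerivWithin k V (Set.Ici a) x‖
        ≤ C * Real.sqrt (1 + x^2) ^ (m₀ - (k:ℝ)))
    (hell : ∀ x ≥ a, Real.sqrt (1 + x^2) ^ m₀ / C₀ ≤ ‖V x - E‖)
    (hψ : ContDiffOn ℝ (⊤ : ℕ∞) ψ (Set.Ici a))
    (hψsq : ∀ x ≥ a, (ψ x)^2 = V x - E)
    (ha₀ : ContDiffOn ℝ (⊤ : ℕ∞) a₀ (Set.Ici a))
    (ha₀ne : ∀ x ≥ a, a₀ x ≠ 0)
    (ha₀sq : ∀ x ≥ a, (a₀ x)^2 * ψ x = 1) :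
    (∃ c > (0:ℝ), ∃ C > (0:ℝ), ∀ x ≥ a,
        c * Real.sqrt (1 + x^2) ^ (-(m₀/4)) ≤ ‖a₀ x‖ ∧
        ‖a₀ x‖ ≤ C * Real.sqrt (1 + x^2) ^ (-(m₀/4))) ∧
    (∀ k : ℕ, ∃ C > (0:ℝ), ∀ x ≥ a,
        ‖iteratedDerivWithin k a₀ (Set.Ici a) x‖
          ≤ C * Real.sqrt (1 + x^2) ^ (-(m₀/4) - (k:ℝ))) := by
  have hs : UniqueDiffOn ℝ (Set.Ici a) := uniqueDiffOn_Ici a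
  obtain ⟨C0u, hC0u, hVb0⟩ := hVb 0
  -- upper bound on ‖V x - E‖
  set M : ℝ := C0u + ‖E‖ with hM
  have hMpos : 0 < M := by positivity
  have hVEub : ∀ x ≥ a, ‖V x - E‖ ≤ M * Real.sqrt (1 + x^2) ^ m₀ := by
    intro x hx
    have h1 : ‖V x‖ ≤ C0u * Real.sqrt (1 + x^2) ^ m₀ := by
      have := hVb0 x hx
      simpa using this
    have h2 : (1:ℝ) ≤ Real.sqrt (1 + x^2) ^ m₀ :=
      Real.one_le_rpow (w_one_le x) hm₀.le
    calc ‖V x - E‖ ≤ ‖V x‖ + ‖E‖ := norm_sub_le _ _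
      _ ≤ C0u * Real.sqrt (1 + x^2) ^ m₀ + ‖E‖ * Real.sqrt (1 + x^2) ^ m₀ := by
          refine add_le_add h1 ?_
          nlinarith [norm_nonneg E]
      _ = M * Real.sqrt (1 + x^2) ^ m₀ := by ring
  have hVElb : ∀ x ≥ a, 0 < ‖V x - E‖ := by
    intro x hx
    have := hell x hx
    have : 0 < Real.sqrt (1 + x^2) ^ m₀ / C₀ := by positivity
    linarith [hell x hx]
  -- the key algebraic identity: ‖a₀ x‖^4 * ‖V x - E‖ = 1
  have hkey : ∀ x ≥ a, ‖a₀ x‖^(4:ℕ) * ‖V x - E‖ = 1 := by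
    intro x hx
    have h1 : (a₀ x)^4 * (V x - E) = 1 := by
      have h2 := ha₀sq x hx
      have h3 := hψsq x hx
      calc (a₀ x)^4 * (V x - E) = ((a₀ x)^2 * ψ x)^2 := by rw [← h3]; ring
        _ = 1 := by rw [h2]; norm_num
    have := congrArg norm h1
    rw [norm_mul, norm_pow, norm_one] at this
    exact this
  set cl : ℝ := M ^ (-(1/4 : ℝ)) with hcl
  set Cu : ℝ := C₀ ^ ((1/4 : ℝ)) with hCu
  have hclpos : 0 < cl := Real.rpow_pos_of_pos hMpos _
  have hCupos : 0 < Cu := Real.rpow_pos_of_pos hC₀ _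
  have hwpow : ∀ x : ℝ, (Real.sqrt (1 + x^2) ^ (-(m₀/4))) ^ (4:ℕ)
      = Real.sqrt (1 + x^2) ^ (-m₀) := by
    intro x
    rw [← Real.rpow_natCast (Real.sqrt (1 + x^2) ^ (-(m₀/4))) 4,
        ← Real.rpow_mul (w_pos x).le]
    norm_num
  have hpart1 : ∀ x ≥ a,
      cl * Real.sqrt (1 + x^2) ^ (-(m₀/4)) ≤ ‖a₀ x‖ ∧
      ‖a₀ x‖ ≤ Cu * Real.sqrt (1 + x^2) ^ (-(m₀/4)) := by
    intro x hx
    have hw0 := w_pos x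
    have hVE := hVElb x hx
    have ht4 : ‖a₀ x‖^(4:ℕ) = ‖V x - E‖⁻¹ :=
      eq_inv_of_mul_eq_one_left (by linear_combination hkey x hx)
    constructor
    · refine le_of_pow_le_pow_left₀ (n := 4) (by norm_num) (norm_nonneg _) ?_
      rw [ht4, mul_pow, hwpow x]
      have hcl4 : cl^(4:ℕ) = M⁻¹ := by
        rw [hcl, ← Real.rpow_natCast (M ^ (-(1/4:ℝ))) 4, ← Real.rpow_mul hMpos.le]
        norm_num [Real.rpow_neg_one]
      rw [hcl4]
      have h1 : ‖V x - E‖ ≤ M * Real.sqrt (1 + x^2) ^ m₀ := hVEub x hx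
      have h2 : (M * Real.sqrt (1 + x^2) ^ m₀)⁻¹ ≤ ‖V x - E‖⁻¹ :=
        inv_anti₀ hVE h1
      calc M⁻¹ * Real.sqrt (1 + x^2) ^ (-m₀)
          = (M * Real.sqrt (1 + x^2) ^ m₀)⁻¹ := by
            rw [mul_inv, Real.rpow_neg hw0.le]
        _ ≤ ‖V x - E‖⁻¹ := h2
    · refine le_of_pow_le_pow_left₀ (n := 4) (by norm_num) (by positivity) ?_
      rw [ht4, mul_pow, hwpow x]
      have hCu4 : Cu^(4:ℕ) = C₀ := by
        rw [hCu, ← Real.rpow_natCast (C₀ ^ ((1/4:ℝ))) 4, ← Real.rpow_mul hC₀.le]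
        norm_num
      rw [hCu4]
      have h1 : Real.sqrt (1 + x^2) ^ m₀ / C₀ ≤ ‖V x - E‖ := hell x hx
      have h2 : ‖V x - E‖⁻¹ ≤ (Real.sqrt (1 + x^2) ^ m₀ / C₀)⁻¹ :=
        inv_anti₀ (by positivity) h1
      calc ‖V x - E‖⁻¹ ≤ (Real.sqrt (1 + x^2) ^ m₀ / C₀)⁻¹ := h2
        _ = C₀ * Real.sqrt (1 + x^2) ^ (-m₀) := by
            rw [inv_div, div_eq_mul_inv, Real.rpow_neg hw0.le]
  -- smoothness of the derivative of V
  have hVd : ContDiffOn ℝ (⊤ : ℕ∞) (derivWithin V (Set.Ici a)) (Set.Ici a) :=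
    hV.derivWithin hs (by simp)
  -- SymB for V'
  have hVdsym : ∀ k : ℕ, SymB a (m₀ - 1) k (derivWithin V (Set.Ici a)) := by
    intro k j hj
    obtain ⟨C, hC, hb⟩ := hVb (j+1)
    refine ⟨C, hC, fun x hx => ?_⟩
    have := hb x hx
    rw [iteratedDerivWithin_succ'] at this
    have hcast : m₀ - ((j+1 : ℕ):ℝ) = (m₀ - 1) - (j:ℝ) := by push_cast; ring
    rwa [hcast] at this
  -- the transport identity: a₀' = -(1/4) a₀⁵ V' on Ici a
  have hEq : Set.EqOn (derivWithin a₀ (Set.Ici a))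
      (fun y => (-(1/4 : ℂ)) * ((a₀ y * a₀ y) * (a₀ y * a₀ y) *
        (a₀ y * derivWithin V (Set.Ici a) y))) (Set.Ici a) := by
    intro y hy
    have hy' : a ≤ y := hy
    have hud : UniqueDiffWithinAt ℝ (Set.Ici a) y := hs y hy
    have hda : DifferentiableWithinAt ℝ a₀ (Set.Ici a) y :=
      ha₀.differentiableOn (by simp) y hy
    have hdp : DifferentiableWithinAt ℝ ψ (Set.Ici a) y :=
      hψ.differentiableOn (by simp) y hy
    have hdv : DifferentiableWithinAt ℝ V (Set.Ici a) y :=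
      hV.differentiableOn (by simp) y hy
    set A := derivWithin a₀ (Set.Ici a) y
    set P := derivWithin ψ (Set.Ici a) y
    set D := derivWithin V (Set.Ici a) y
    -- eq1 : derivative of a₀·a₀·ψ = 0
    have e1 : (A * a₀ y + a₀ y * A) * ψ y + (a₀ y * a₀ y) * P = 0 := by
      have h0 : derivWithin (fun x => a₀ x * a₀ x * ψ x) (Set.Ici a) y = 0 := by
        have heq : Set.EqOn (fun x => a₀ x * a₀ x * ψ x) (fun _ => (1:ℂ)) (Set.Ici a) := by
          intro z hz
          have := ha₀sq z hz
          simp only []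
          calc a₀ z * a₀ z * ψ z = (a₀ z)^2 * ψ z := by ring
            _ = 1 := this
        rw [derivWithin_congr heq (heq hy)]
        exact (hasDerivWithinAt_const _ _ _).derivWithin hud
      rw [derivWithin_fun_mul (c := fun x => a₀ x * a₀ x) (hda.mul hda) hdp,
          derivWithin_fun_mul hda hda] at h0
      exact h0
    -- eq2 : derivative of ψ·ψ = V'
    have e2 : P * ψ y + ψ y * P = D := by
      have h0 : derivWithin (fun x => ψ x * ψ x) (Set.Ici a) y
          = derivWithin (fun x => V x - E) (Set.Ici a) y := by
        refine derivWithin_congr (fun z hz => ?_) ?_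
        · have := hψsq z hz
          simpa [sq] using this
        · have := hψsq y hy
          simpa [sq] using this
      rw [derivWithin_fun_mul hdp hdp, derivWithin_sub_const] at h0
      exact h0
    have e3 : (a₀ y)^2 * ψ y = 1 := ha₀sq y hy
    show A = (-(1/4 : ℂ)) * ((a₀ y * a₀ y) * (a₀ y * a₀ y) * (a₀ y * D))
    have hane : a₀ y ≠ 0 := ha₀ne y hy
    have hpne : ψ y ≠ 0 := by
      intro h
      rw [h, mul_zero] at e3
      exact one_ne_zero e3.symm
    linear_combination (a₀ y / 2) * e1 - ((a₀ y)^5 / 4) * e2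
      + ((a₀ y)^3 * P / 2 - A) * e3
  -- main induction for the derivative bounds
  have main2 : ∀ k : ℕ, ∃ C > (0:ℝ), ∀ x ≥ a,
      ‖iteratedDerivWithin k a₀ (Set.Ici a) x‖
        ≤ C * Real.sqrt (1 + x^2) ^ (-(m₀/4) - (k:ℝ)) := by
    intro k
    induction k using Nat.strong_induction_on with
    | _ k IH =>
      match k with
      | 0 =>
        refine ⟨Cu, hCupos, fun x hx => ?_⟩
        have := (hpart1 x hx).2
        simpa using this
      | (k+1) =>
        have hsymA : SymB a (-(m₀/4)) k a₀ := fun j hj => by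
          have := IH j (Nat.lt_succ_of_le hj)
          exact this
        have hc2 : ContDiffOn ℝ (⊤ : ℕ∞) (fun x => a₀ x * a₀ x) (Set.Ici a) := ha₀.mul ha₀
        have hc4 : ContDiffOn ℝ (⊤ : ℕ∞) (fun x => (a₀ x * a₀ x) * (a₀ x * a₀ x)) (Set.Ici a) :=
          hc2.mul hc2
        have hcav : ContDiffOn ℝ (⊤ : ℕ∞)
            (fun x => a₀ x * derivWithin V (Set.Ici a) x) (Set.Ici a) := ha₀.mul hVd
        have h2 : SymB a (-(m₀/4) + -(m₀/4)) k (fun x => a₀ x * a₀ x) :=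
          SymB.mul ha₀ ha₀ hsymA hsymA
        have h4 : SymB a ((-(m₀/4) + -(m₀/4)) + (-(m₀/4) + -(m₀/4))) k
            (fun x => (a₀ x * a₀ x) * (a₀ x * a₀ x)) := SymB.mul hc2 hc2 h2 h2
        have hav : SymB a (-(m₀/4) + (m₀ - 1)) k
            (fun x => a₀ x * derivWithin V (Set.Ici a) x) :=
          SymB.mul ha₀ hVd hsymA (hVdsym k)
        have hH : SymB a (((-(m₀/4) + -(m₀/4)) + (-(m₀/4) + -(m₀/4))) + (-(m₀/4) + (m₀ - 1))) k
            (fun x => ((a₀ x * a₀ x) * (a₀ x * a₀ x)) *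
              (a₀ x * derivWithin V (Set.Ici a) x)) := SymB.mul hc4 hcav h4 hav
        obtain ⟨C, hC, hb⟩ := hH k le_rfl
        refine ⟨(1/4) * C, by positivity, fun x hx => ?_⟩
        have hx' : x ∈ Set.Ici a := hx
        set H : ℝ → ℂ := fun x => ((a₀ x * a₀ x) * (a₀ x * a₀ x)) *
              (a₀ x * derivWithin V (Set.Ici a) x) with hHdef
        have hHc : ContDiffOn ℝ (k:ℕ∞) H (Set.Ici a) := (hc4.mul hcav).of_le (by exact_mod_cast le_top)
        have step1 : iteratedDerivWithin (k+1) a₀ (Set.Ici a) x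
            = iteratedDerivWithin k (derivWithin a₀ (Set.Ici a)) (Set.Ici a) x :=
          by rw [iteratedDerivWithin_succ']
        have step2 : iteratedDerivWithin k (derivWithin a₀ (Set.Ici a)) (Set.Ici a) x
            = iteratedDerivWithin k ((-(1/4 : ℂ)) • H) (Set.Ici a) x := by
          refine iteratedDerivWithin_congr ?_ hx'
          intro z hz
          have := hEq hz
          simpa [hHdef] using this
        have step3 : iteratedDerivWithin k ((-(1/4 : ℂ)) • H) (Set.Ici a) x
            = (-(1/4 : ℂ)) • iteratedDerivWithin k H (Set.Ici a) x :=
          iteratedDerivWithin_const_smul hx' hs _ (hHc x hx')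
        rw [step1, step2, step3, norm_smul]
        have hn14 : ‖(-(1/4 : ℂ))‖ = 1/4 := by norm_num
        rw [hn14]
        have hbx := hb x hx
        have hexp : (((-(m₀/4) + -(m₀/4)) + (-(m₀/4) + -(m₀/4))) + (-(m₀/4) + (m₀ - 1)))
            - (k:ℝ) = -(m₀/4) - ((k+1 : ℕ):ℝ) := by push_cast; ring
        rw [hexp] at hbx
        calc (1/4 : ℝ) * ‖iteratedDerivWithin k H (Set.Ici a) x‖
            ≤ (1/4) * (C * Real.sqrt (1 + x^2) ^ (-(m₀/4) - ((k+1 : ℕ):ℝ))) := by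
              linarith
          _ = (1/4) * C * Real.sqrt (1 + x^2) ^ (-(m₀/4) - ((k+1 : ℕ):ℝ)) := by ring
  exact ⟨⟨cl, hclpos, Cu, hCupos, hpart1⟩, main2⟩
end

section
/- Let m₀ > 0, a ∈ ℝ, E ∈ ℂ, C₀ > 0, h₀ > 0, and let V ∈ C^∞([a,∞), ℂ) satisfy |V^{(k)}(x)| ≤ C_k ⟨x⟩^{m₀−k} for all k and |V(x) − E| ≥ ⟨x⟩^{m₀}/C₀ on [a,∞). Let ψ ∈ C^∞([a,∞), ℂ) with ψ² = V − E, set Ψ(x) = ∫_a^x ψ(t) dt, and let (a_j)_{j≥0} be smooth functions on [a,∞) with a₀² ψ = 1, satisfying the transport equations ψ a_j′ + (1/2) ψ′ a_j = (1/2) a_{j−1}″ for j ≥ 1, and the bounds |a_j^{(k)}(x)| ≤ C_{j,k} ⟨x⟩^{−m₀/4 − j(m₀/2+1) − k}. Let a(x,h) be smooth in x and satisfy, for all N, k: |∂_x^k( a(x,h) − Σ_{j=0}^{N−1} a_j(x) h^j )| ≤ C′_{N,k} h^{N} ⟨x⟩^{−m₀/4 − N(m₀/2+1) − k} uniformly for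 x ≥ a, h ∈ (0,h₀]. Then the function u(x,h) = a(x,h) e^{−Ψ(x)/h} satisfies −h²u″ + (V − E)u = e^{−Ψ/h} r(x,h), where for every N ∈ ℕ there is C_N > 0 such that |r(x,h)| ≤ C_N h^{N} ⟨x⟩^{−N} for all x ≥ a and h ∈ (0,h₀]. -/
set_option maxHeartbeats 1000000
open Set MeasureTheory

namespace Stmt11Aux

lemma iter2_eq {a : ℝ} (f : ℝ → ℂ) {x : ℝ} (hx : x ∈ Ici a) :
    iteratedDerivWithin 2 f (Ici a) x = derivWithin (derivWithin f (Ici a)) (Ici a) x := by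
  have hu : UniqueDiffOn ℝ (Ici a) := uniqueDiffOn_Ici a
  rw [show (2:ℕ) = 1+1 from rfl, iteratedDerivWithin_succ]
  exact derivWithin_congr (fun y hy => congrFun iteratedDerivWithin_one y)
    (congrFun iteratedDerivWithin_one x)

lemma phi_hasDeriv {a : ℝ} {ψ : ℝ → ℂ} (hψc : ContinuousOn ψ (Ici a)) {y : ℝ}
    (hy : y ∈ Ici a) :
    HasDerivWithinAt (fun z => ∫ t in a..z, ψ t) (ψ y) (Ici a) y := by
  have hint : IntervalIntegrable ψ volume a y := by
    apply ContinuousOn.intervalIntegrable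
    apply hψc.mono
    rw [Set.uIcc_of_le (hy : a ≤ y)]
    exact Icc_subset_Ici_self
  rcases eq_or_lt_of_le (Set.mem_Ici.mp hy) with h|h
  · subst h
    exact intervalIntegral.integral_hasDerivWithinAt_right hint
      ⟨Ioi a, self_mem_nhdsWithin,
        (hψc.mono Ioi_subset_Ici_self).aestronglyMeasurable measurableSet_Ioi⟩
      ((hψc a Set.self_mem_Ici).mono Ioi_subset_Ici_self)
  · exact (intervalIntegral.integral_hasDerivAt_right hint
      ⟨Ici a, Ici_mem_nhds h, hψc.aestronglyMeasurable measurableSet_Ici⟩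
      ((hψc y hy).continuousAt (Ici_mem_nhds h))).hasDerivWithinAt

lemma u_hasDeriv {a h : ℝ} {ψ f : ℝ → ℂ}
    (hψ : ContDiffOn ℝ (⊤ : ℕ∞) ψ (Ici a)) (hf : ContDiffOn ℝ (⊤ : ℕ∞) f (Ici a))
    {y : ℝ} (hy : y ∈ Ici a) :
    HasDerivWithinAt (fun z => f z * Complex.exp (-(∫ t in a..z, ψ t) / (h:ℂ)))
      ((derivWithin f (Ici a) y - f y * ψ y / (h:ℂ)) *
        Complex.exp (-(∫ t in a..y, ψ t) / (h:ℂ))) (Ici a) y := by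
  have hf' : HasDerivWithinAt f (derivWithin f (Ici a) y) (Ici a) y :=
    ((hf.differentiableOn (by simp)) y hy).hasDerivWithinAt
  have hE : HasDerivWithinAt (fun z => Complex.exp (-(∫ t in a..z, ψ t) / (h:ℂ)))
      (Complex.exp (-(∫ t in a..y, ψ t) / (h:ℂ)) * (-(ψ y) / (h:ℂ))) (Ici a) y :=
    (((phi_hasDeriv hψ.continuousOn hy).neg).div_const (h:ℂ)).cexp
  exact (hf'.fun_mul hE).congr_deriv (by ring)

lemma u_iter2 {a h : ℝ} {ψ f : ℝ → ℂ}
    (hψ : ContDiffOn ℝ (⊤ : ℕ∞) ψ (Ici a)) (hf : ContDiffOn ℝ (⊤ : ℕ∞) f (Ici a))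
    {x : ℝ} (hx : x ∈ Ici a) :
    iteratedDerivWithin 2 (fun z => f z * Complex.exp (-(∫ t in a..z, ψ t) / (h:ℂ)))
        (Ici a) x
      = (iteratedDerivWithin 2 f (Ici a) x
          - 2 * derivWithin f (Ici a) x * ψ x / (h:ℂ)
          - f x * derivWithin ψ (Ici a) x / (h:ℂ)
          + f x * (ψ x)^2 / (h:ℂ)^2) *
        Complex.exp (-(∫ t in a..x, ψ t) / (h:ℂ)) := by
  have hu : UniqueDiffOn ℝ (Ici a) := uniqueDiffOn_Ici a
  rw [iter2_eq _ hx]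
  have e1 : ∀ y ∈ Ici a,
      derivWithin (fun z => f z * Complex.exp (-(∫ t in a..z, ψ t) / (h:ℂ))) (Ici a) y
        = (derivWithin f (Ici a) y - f y * ψ y / (h:ℂ)) *
            Complex.exp (-(∫ t in a..y, ψ t) / (h:ℂ)) := fun y hy =>
    (u_hasDeriv hψ hf hy).derivWithin (hu.uniqueDiffWithinAt hy)
  rw [derivWithin_congr e1 (e1 x hx)]
  have hdf : ContDiffOn ℝ (⊤ : ℕ∞) (derivWithin f (Ici a)) (Ici a) := hf.derivWithin hu (by simp)
  have h1 : HasDerivWithinAt (fun y => derivWithin f (Ici a) y - f y * ψ y / (h:ℂ))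
      (derivWithin (derivWithin f (Ici a)) (Ici a) x
        - (derivWithin f (Ici a) x * ψ x + f x * derivWithin ψ (Ici a) x) / (h:ℂ))
      (Ici a) x :=
    ((hdf.differentiableOn (by simp) x hx).hasDerivWithinAt).sub
      ((((hf.differentiableOn (by simp) x hx).hasDerivWithinAt).mul
        ((hψ.differentiableOn (by simp) x hx).hasDerivWithinAt)).div_const _)
  have hE : HasDerivWithinAt (fun z => Complex.exp (-(∫ t in a..z, ψ t) / (h:ℂ)))
      (Complex.exp (-(∫ t in a..x, ψ t) / (h:ℂ)) * (-(ψ x) / (h:ℂ))) (Ici a) x :=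
    (((phi_hasDeriv hψ.continuousOn hx).neg).div_const (h:ℂ)).cexp
  rw [(h1.fun_mul hE).derivWithin (hu.uniqueDiffWithinAt hx), iter2_eq f hx]
  ring

lemma deriv_add_eq {a : ℝ} {f g : ℝ → ℂ} (hf : ContDiffOn ℝ (⊤ : ℕ∞) f (Ici a))
    (hg : ContDiffOn ℝ (⊤ : ℕ∞) g (Ici a)) {x : ℝ} (hx : x ∈ Ici a) :
    derivWithin (fun y => f y + g y) (Ici a) x
      = derivWithin f (Ici a) x + derivWithin g (Ici a) x :=
  (((hf.differentiableOn (by simp) x hx).hasDerivWithinAt).add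
    ((hg.differentiableOn (by simp) x hx).hasDerivWithinAt)).derivWithin
    ((uniqueDiffOn_Ici a).uniqueDiffWithinAt hx)

lemma iter2_add_eq {a : ℝ} {f g : ℝ → ℂ} (hf : ContDiffOn ℝ (⊤ : ℕ∞) f (Ici a))
    (hg : ContDiffOn ℝ (⊤ : ℕ∞) g (Ici a)) {x : ℝ} (hx : x ∈ Ici a) :
    iteratedDerivWithin 2 (fun y => f y + g y) (Ici a) x
      = iteratedDerivWithin 2 f (Ici a) x + iteratedDerivWithin 2 g (Ici a) x := by
  have hu : UniqueDiffOn ℝ (Ici a) := uniqueDiffOn_Ici a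
  rw [iter2_eq _ hx, iter2_eq f hx, iter2_eq g hx]
  have e1 : ∀ y ∈ Ici a, derivWithin (fun z => f z + g z) (Ici a) y
      = derivWithin f (Ici a) y + derivWithin g (Ici a) y := fun y hy => deriv_add_eq hf hg hy
  rw [derivWithin_congr e1 (e1 x hx)]
  exact ((((hf.derivWithin (m := (⊤ : ℕ∞)) hu (by simp)).differentiableOn (by simp) x hx).hasDerivWithinAt).add
    (((hg.derivWithin (m := (⊤ : ℕ∞)) hu (by simp)).differentiableOn (by simp) x hx).hasDerivWithinAt)).derivWithin
    (hu.uniqueDiffWithinAt hx)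

lemma deriv_mul_const_eq {a : ℝ} {f : ℝ → ℂ} (hf : ContDiffOn ℝ (⊤ : ℕ∞) f (Ici a)) (c : ℂ)
    {x : ℝ} (hx : x ∈ Ici a) :
    derivWithin (fun y => f y * c) (Ici a) x = derivWithin f (Ici a) x * c :=
  (((hf.differentiableOn (by simp) x hx).hasDerivWithinAt).mul_const c).derivWithin
    ((uniqueDiffOn_Ici a).uniqueDiffWithinAt hx)

lemma iter2_mul_const_eq {a : ℝ} {f : ℝ → ℂ} (hf : ContDiffOn ℝ (⊤ : ℕ∞) f (Ici a)) (c : ℂ)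
    {x : ℝ} (hx : x ∈ Ici a) :
    iteratedDerivWithin 2 (fun y => f y * c) (Ici a) x
      = iteratedDerivWithin 2 f (Ici a) x * c := by
  have hu : UniqueDiffOn ℝ (Ici a) := uniqueDiffOn_Ici a
  rw [iter2_eq _ hx, iter2_eq f hx]
  have e1 : ∀ y ∈ Ici a, derivWithin (fun z => f z * c) (Ici a) y
      = derivWithin f (Ici a) y * c := fun y hy => deriv_mul_const_eq hf c hy
  rw [derivWithin_congr e1 (e1 x hx)]
  exact ((((hf.derivWithin (m := (⊤ : ℕ∞)) hu (by simp)).differentiableOn (by simp) x hx).hasDerivWithinAt).mul_const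
    c).derivWithin (hu.uniqueDiffWithinAt hx)

end Stmt11Aux

/-- the resummed WKB ansatz is an approximate solution. With `V`
satisfying (A2) and `|V − E| ≥ ⟨x⟩^{m₀}/C₀`, `ψ` a smooth branch of `(V−E)^{1/2}`,
`Ψ(x) = ∫_a^x ψ`, amplitudes `(a_j)` solving the transport equations with symbol
bounds, and `A(h,·)` a resummation of `Σ a_j h^j`, the function
`u = A(h,x)e^{−Ψ(x)/h}` satisfies `−h²u″ + (V−E)u = e^{−Ψ/h}·r(x,h)` with
`|r(x,h)| ≤ C_N h^N ⟨x⟩^{−N}` for every `N`. -/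
theorem stmt_11 (m₀ a : ℝ) (hm₀ : 0 < m₀) (E : ℂ) (C₀ h₀ : ℝ)
    (hC₀ : 0 < C₀) (hh₀ : 0 < h₀)
    (V ψ : ℝ → ℂ) (aa : ℕ → ℝ → ℂ) (A : ℝ → ℝ → ℂ)
    (hV : ContDiffOn ℝ (⊤ : ℕ∞) V (Set.Ici a))
    (hVb : ∀ k : ℕ, ∃ C > (0:ℝ), ∀ x ≥ a,
      ‖iteratedDerivWithin k V (Set.Ici a) x‖
        ≤ C * Real.sqrt (1 + x^2) ^ (m₀ - (k:ℝ)))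
    (hell : ∀ x ≥ a, Real.sqrt (1 + x^2) ^ m₀ / C₀ ≤ ‖V x - E‖)
    (hψ : ContDiffOn ℝ (⊤ : ℕ∞) ψ (Set.Ici a))
    (hψsq : ∀ x ≥ a, (ψ x)^2 = V x - E)
    (hsm : ∀ j, ContDiffOn ℝ (⊤ : ℕ∞) (aa j) (Set.Ici a))
    (ha₀sq : ∀ x ≥ a, (aa 0 x)^2 * ψ x = 1)
    (htr : ∀ j : ℕ, 1 ≤ j → ∀ x ≥ a,
      ψ x * derivWithin (aa j) (Set.Ici a) x
        + (1/2) * derivWithin ψ (Set.Ici a) x * aa j x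
        = (1/2) * iteratedDerivWithin 2 (aa (j-1)) (Set.Ici a) x)
    (hab : ∀ j k : ℕ, ∃ C > (0:ℝ), ∀ x ≥ a,
      ‖iteratedDerivWithin k (aa j) (Set.Ici a) x‖
        ≤ C * Real.sqrt (1 + x^2) ^ (-(m₀/4) - (j:ℝ)*(m₀/2+1) - (k:ℝ)))
    (hA : ∀ h ∈ Set.Ioc (0:ℝ) h₀, ContDiffOn ℝ (⊤ : ℕ∞) (A h) (Set.Ici a))
    (hAb : ∀ N k : ℕ, ∃ C > (0:ℝ), ∀ h ∈ Set.Ioc (0:ℝ) h₀, ∀ x ≥ a,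
      ‖iteratedDerivWithin k
          (fun y => A h y - ∑ j ∈ Finset.range N, aa j y * (h:ℂ)^j)
          (Set.Ici a) x‖
        ≤ C * h^N * Real.sqrt (1 + x^2) ^ (-(m₀/4) - (N:ℝ)*(m₀/2+1) - (k:ℝ))) :
    ∃ r : ℝ → ℝ → ℂ,
      (∀ h ∈ Set.Ioc (0:ℝ) h₀, ∀ x ≥ a,
        -(h:ℂ)^2 * iteratedDerivWithin 2
            (fun y => A h y * Complex.exp (-(∫ t in a..y, ψ t) / (h:ℂ)))
            (Set.Ici a) x
          + (V x - E) * (A h x * Complex.exp (-(∫ t in a..x, ψ t) / (h:ℂ)))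
          = Complex.exp (-(∫ t in a..x, ψ t) / (h:ℂ)) * r h x) ∧
      (∀ N : ℕ, ∃ C > (0:ℝ), ∀ h ∈ Set.Ioc (0:ℝ) h₀, ∀ x ≥ a,
        ‖r h x‖ ≤ C * h^N * Real.sqrt (1 + x^2) ^ (-(N:ℝ))) := by
  classical
  have hu : UniqueDiffOn ℝ (Set.Ici a) := uniqueDiffOn_Ici a
  -- weight facts
  have hw1 : ∀ x : ℝ, (1:ℝ) ≤ Real.sqrt (1 + x^2) := by
    intro x
    have h1 : (1:ℝ) ≤ 1 + x^2 := by nlinarith [sq_nonneg x]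
    have := Real.sqrt_le_sqrt h1
    simpa using this
  have hw0 : ∀ x : ℝ, (0:ℝ) < Real.sqrt (1 + x^2) := fun x => lt_of_lt_of_le one_pos (hw1 x)
  have hwrp : ∀ (x p : ℝ), 0 ≤ p → (1:ℝ) ≤ Real.sqrt (1 + x^2) ^ p := fun x p hp =>
    Real.one_le_rpow (hw1 x) hp
  have hsqrt_rpow : ∀ (x p : ℝ), Real.sqrt (Real.sqrt (1 + x^2) ^ p)
      = Real.sqrt (1 + x^2) ^ (p/2) := by
    intro x p
    rw [show p/2 = p * (1/2) by ring, Real.rpow_mul (Real.sqrt_nonneg _), ← Real.sqrt_eq_rpow]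
  -- constants for V
  obtain ⟨CV, hCVpos, hCVb⟩ := hVb 0
  obtain ⟨CV1, hCV1pos, hCV1b⟩ := hVb 1
  -- upper bound for ψ
  have hψub : ∀ x ≥ a, ‖ψ x‖ ≤ Real.sqrt (CV + ‖E‖) * Real.sqrt (1 + x^2) ^ (m₀/2) := by
    intro x hx
    have h0 : ‖ψ x‖^2 = ‖V x - E‖ := by rw [← hψsq x hx, norm_pow]
    have hV0 : ‖V x‖ ≤ CV * Real.sqrt (1 + x^2) ^ m₀ := by
      have := hCVb x hx
      simpa using this
    have hwm : (1:ℝ) ≤ Real.sqrt (1 + x^2) ^ m₀ := hwrp x m₀ hm₀.le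
    have h2 : ‖ψ x‖^2 ≤ (CV + ‖E‖) * Real.sqrt (1 + x^2) ^ m₀ := by
      have h3 : ‖V x - E‖ ≤ ‖V x‖ + ‖E‖ := norm_sub_le _ _
      nlinarith [norm_nonneg E, norm_nonneg (V x)]
    calc ‖ψ x‖ = Real.sqrt (‖ψ x‖^2) := (Real.sqrt_sq (norm_nonneg _)).symm
      _ ≤ Real.sqrt ((CV + ‖E‖) * Real.sqrt (1 + x^2) ^ m₀) := Real.sqrt_le_sqrt h2
      _ = Real.sqrt (CV + ‖E‖) * Real.sqrt (Real.sqrt (1 + x^2) ^ m₀) :=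
          Real.sqrt_mul (by positivity) _
      _ = Real.sqrt (CV + ‖E‖) * Real.sqrt (1 + x^2) ^ (m₀/2) := by rw [hsqrt_rpow]
  -- lower bound for ψ
  have hψlb : ∀ x ≥ a, Real.sqrt (1 + x^2) ^ (m₀/2) / Real.sqrt C₀ ≤ ‖ψ x‖ := by
    intro x hx
    have h0 : ‖ψ x‖^2 = ‖V x - E‖ := by rw [← hψsq x hx, norm_pow]
    calc Real.sqrt (1 + x^2) ^ (m₀/2) / Real.sqrt C₀
        = Real.sqrt (Real.sqrt (1 + x^2) ^ m₀) / Real.sqrt C₀ := by rw [hsqrt_rpow]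
      _ = Real.sqrt (Real.sqrt (1 + x^2) ^ m₀ / C₀) := (Real.sqrt_div (by positivity) _).symm
      _ ≤ Real.sqrt (‖V x - E‖) := Real.sqrt_le_sqrt (hell x hx)
      _ = Real.sqrt (‖ψ x‖^2) := by rw [h0]
      _ = ‖ψ x‖ := Real.sqrt_sq (norm_nonneg _)
  -- derivative identity 2ψψ' = V'
  have hψ'eq : ∀ x ≥ a, 2 * ψ x * derivWithin ψ (Set.Ici a) x = derivWithin V (Set.Ici a) x := by
    intro x hx
    have hd := ((hψ.differentiableOn (by simp)) x hx).hasDerivWithinAt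
    have hp : HasDerivWithinAt (fun y => (ψ y)^2)
        (2 * ψ x * derivWithin ψ (Set.Ici a) x) (Set.Ici a) x := by
      rw [show (fun y => (ψ y)^2) = fun y => ψ y * ψ y from funext fun y => pow_two _]
      exact (hd.fun_mul hd).congr_deriv (by ring)
    have hVd : HasDerivWithinAt (fun y => V y - E) (derivWithin V (Set.Ici a) x)
        (Set.Ici a) x :=
      ((hV.differentiableOn (by simp) x hx).hasDerivWithinAt).sub_const E
    calc 2 * ψ x * derivWithin ψ (Set.Ici a) x
        = derivWithin (fun y => (ψ y)^2) (Set.Ici a) x :=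
          (hp.derivWithin (hu.uniqueDiffWithinAt hx)).symm
      _ = derivWithin (fun y => V y - E) (Set.Ici a) x :=
          derivWithin_congr (fun y hy => hψsq y hy) (hψsq x hx)
      _ = derivWithin V (Set.Ici a) x := hVd.derivWithin (hu.uniqueDiffWithinAt hx)
  -- bound for ψ'
  have hψ'b : ∀ x ≥ a, ‖derivWithin ψ (Set.Ici a) x‖
      ≤ (CV1 * Real.sqrt C₀ / 2) * Real.sqrt (1 + x^2) ^ (m₀/2 - 1) := by
    intro x hx
    have hV1 : ‖derivWithin V (Set.Ici a) x‖ ≤ CV1 * Real.sqrt (1 + x^2) ^ (m₀ - 1) := by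
      have := hCV1b x hx
      rw [iteratedDerivWithin_one] at this
      simpa using this
    have key : 2 * ‖ψ x‖ * ‖derivWithin ψ (Set.Ici a) x‖
        ≤ CV1 * Real.sqrt (1 + x^2) ^ (m₀ - 1) := by
      have h1 : ‖2 * ψ x * derivWithin ψ (Set.Ici a) x‖
          = 2 * ‖ψ x‖ * ‖derivWithin ψ (Set.Ici a) x‖ := by
        rw [norm_mul, norm_mul]
        norm_num
      rw [← h1, hψ'eq x hx]
      exact hV1
    have hlb := hψlb x hx
    have hC₀s : (0:ℝ) < Real.sqrt C₀ := Real.sqrt_pos.mpr hC₀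
    have hw2 : (0:ℝ) < Real.sqrt (1 + x^2) ^ (m₀/2) := Real.rpow_pos_of_pos (hw0 x) _
    have h2 : 2 * (Real.sqrt (1 + x^2) ^ (m₀/2) / Real.sqrt C₀) *
        ‖derivWithin ψ (Set.Ici a) x‖ ≤ CV1 * Real.sqrt (1 + x^2) ^ (m₀ - 1) := by
      refine le_trans ?_ key
      have := norm_nonneg (derivWithin ψ (Set.Ici a) x)
      nlinarith
    have h3 := mul_le_mul_of_nonneg_left h2 hC₀s.le
    have h4 : Real.sqrt C₀ * (2 * (Real.sqrt (1 + x^2) ^ (m₀/2) / Real.sqrt C₀) *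
        ‖derivWithin ψ (Set.Ici a) x‖)
        = ‖derivWithin ψ (Set.Ici a) x‖ * (2 * Real.sqrt (1 + x^2) ^ (m₀/2)) := by
      field_simp
    rw [h4] at h3
    have h5 : (CV1 * Real.sqrt C₀ / 2) * Real.sqrt (1 + x^2) ^ (m₀/2 - 1)
        = (Real.sqrt C₀ * (CV1 * Real.sqrt (1 + x^2) ^ (m₀ - 1))) /
          (2 * Real.sqrt (1 + x^2) ^ (m₀/2)) := by
      rw [show m₀/2 - 1 = (m₀ - 1) - (m₀/2) by ring, Real.rpow_sub (hw0 x)]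
      field_simp
    rw [h5, le_div_iff₀ (by positivity)]
    exact h3
  -- eikonal zero-order relation
  have heik : ∀ x ≥ a, 2 * ψ x * derivWithin (aa 0) (Set.Ici a) x
      + derivWithin ψ (Set.Ici a) x * aa 0 x = 0 := by
    intro x hx
    have ha0d := ((hsm 0).differentiableOn (by simp) x hx).hasDerivWithinAt
    have hψd := ((hψ.differentiableOn (by simp)) x hx).hasDerivWithinAt
    have hp : HasDerivWithinAt (fun y => (aa 0 y)^2)
        (2 * aa 0 x * derivWithin (aa 0) (Set.Ici a) x) (Set.Ici a) x := by
      rw [show (fun y => (aa 0 y)^2) = fun y => aa 0 y * aa 0 y from funext fun y => pow_two _]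
      exact (ha0d.fun_mul ha0d).congr_deriv (by ring)
    have hF := hp.fun_mul hψd
    have h0 : derivWithin (fun y => (aa 0 y)^2 * ψ y) (Set.Ici a) x = 0 := by
      have e : derivWithin (fun y => (aa 0 y)^2 * ψ y) (Set.Ici a) x
          = derivWithin (fun _ => (1:ℂ)) (Set.Ici a) x :=
        derivWithin_congr (fun y hy => ha₀sq y hy) (ha₀sq x hx)
      rw [e]
      exact (hasDerivWithinAt_const x (Set.Ici a) (1:ℂ)).derivWithin (hu.uniqueDiffWithinAt hx)
    have heq := hF.derivWithin (hu.uniqueDiffWithinAt hx)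
    rw [h0] at heq
    have hne : aa 0 x ≠ 0 := by
      intro h0'
      have := ha₀sq x hx
      rw [h0'] at this
      simp at this
    have key : aa 0 x * (2 * ψ x * derivWithin (aa 0) (Set.Ici a) x
        + derivWithin ψ (Set.Ici a) x * aa 0 x) = 0 := by
      linear_combination (-1 : ℂ) * heq
    exact (mul_eq_zero.mp key).resolve_left hne
  -- smoothness of partial sums
  have hSM : ∀ (c : ℂ) (M : ℕ),
      ContDiffOn ℝ (⊤ : ℕ∞) (fun y => ∑ j ∈ Finset.range M, aa j y * c^j) (Set.Ici a) :=
    fun c M => ContDiffOn.sum (fun j _ => (hsm j).mul contDiffOn_const)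
  -- transport equations, rescaled
  have htr2 : ∀ j : ℕ, ∀ x ≥ a, 2 * ψ x * derivWithin (aa (j+1)) (Set.Ici a) x
      + derivWithin ψ (Set.Ici a) x * aa (j+1) x
      = iteratedDerivWithin 2 (aa j) (Set.Ici a) x := by
    intro j x hx
    have h1 := htr (j+1) (by omega) x hx
    simp only [Nat.add_sub_cancel] at h1
    linear_combination 2 * h1
  -- telescoping identity
  have htel : ∀ (h : ℝ) (M : ℕ), ∀ x ≥ a,
      -(h:ℂ)^2 * iteratedDerivWithin 2
          (fun y => ∑ j ∈ Finset.range (M+1), aa j y * (h:ℂ)^j) (Set.Ici a) x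
        + (h:ℂ) * (2 * ψ x * derivWithin
            (fun y => ∑ j ∈ Finset.range (M+1), aa j y * (h:ℂ)^j) (Set.Ici a) x
          + derivWithin ψ (Set.Ici a) x * (∑ j ∈ Finset.range (M+1), aa j x * (h:ℂ)^j))
      = -(h:ℂ)^(M+2) * iteratedDerivWithin 2 (aa M) (Set.Ici a) x := by
    intro h M
    induction M with
    | zero =>
      intro x hx
      simp only [zero_add, Finset.sum_range_one, pow_zero, mul_one]
      rw [heik x hx]
      ring
    | succ M ih =>
      intro x hx
      have hSsm := hSM (h:ℂ) (M+1)
      have hgsm : ContDiffOn ℝ (⊤ : ℕ∞) (fun y => aa (M+1) y * (h:ℂ)^(M+1)) (Set.Ici a) :=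
        (hsm (M+1)).mul contDiffOn_const
      have e0 : (fun y => ∑ j ∈ Finset.range (M+1+1), aa j y * (h:ℂ)^j)
          = fun y => (∑ j ∈ Finset.range (M+1), aa j y * (h:ℂ)^j)
              + aa (M+1) y * (h:ℂ)^(M+1) := funext fun y => Finset.sum_range_succ _ _
      rw [e0, Stmt11Aux.iter2_add_eq hSsm hgsm hx, Stmt11Aux.deriv_add_eq hSsm hgsm hx,
        Stmt11Aux.iter2_mul_const_eq (hsm (M+1)) _ hx,
        Stmt11Aux.deriv_mul_const_eq (hsm (M+1)) _ hx, Finset.sum_range_succ]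
      linear_combination (ih x hx) + (h:ℂ)^(M+2) * (htr2 M x hx)
  -- the remainder function
  refine ⟨fun h x => -(h:ℂ)^2 * iteratedDerivWithin 2 (A h) (Set.Ici a) x
      + (h:ℂ) * (2 * ψ x * derivWithin (A h) (Set.Ici a) x
        + derivWithin ψ (Set.Ici a) x * A h x), ?_, ?_⟩
  · intro h hh x hx
    have hhne : (h:ℂ) ≠ 0 := Complex.ofReal_ne_zero.mpr (ne_of_gt hh.1)
    beta_reduce
    rw [Stmt11Aux.u_iter2 hψ (hA h hh) hx, ← hψsq x hx]
    field_simp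
    ring
  · intro N
    have hM₁def : ∃ M₁ : ℕ, M₁ = N + Nat.ceil (m₀/4) := ⟨_, rfl⟩
    obtain ⟨M₁, hM₁def⟩ := hM₁def
    have hNM : N ≤ M₁ := by omega
    obtain ⟨C1, hC1pos, hC1b⟩ := hab M₁ 2
    obtain ⟨C2, hC2pos, hC2b⟩ := hAb (M₁+1) 2
    obtain ⟨C3, hC3pos, hC3b⟩ := hAb (M₁+1) 1
    obtain ⟨C4, hC4pos, hC4b⟩ := hAb (M₁+1) 0
    have hCppos : (0:ℝ) < Real.sqrt (CV + ‖E‖) := Real.sqrt_pos.mpr (by positivity)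
    have hCqpos : (0:ℝ) < CV1 * Real.sqrt C₀ / 2 := by
      have := Real.sqrt_pos.mpr hC₀
      positivity
    refine ⟨(C1 + h₀*C2 + 2*(Real.sqrt (CV + ‖E‖))*C3 + (CV1 * Real.sqrt C₀ / 2)*C4)
        * h₀^(M₁+2-N), by positivity, ?_⟩
    intro h hh x hx
    have hhpos : (0:ℝ) < h := hh.1
    have hnc : ∀ k : ℕ, ‖((h:ℝ):ℂ)^k‖ = h^k := by
      intro k
      rw [norm_pow, Complex.norm_real, Real.norm_eq_abs, abs_of_pos hhpos]
    have hnc1 : ‖((h:ℝ):ℂ)‖ = h := by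
      rw [Complex.norm_real, Real.norm_eq_abs, abs_of_pos hhpos]
    beta_reduce
    -- decomposition
    have hRsm : ContDiffOn ℝ (⊤ : ℕ∞)
        (fun y => A h y - ∑ j ∈ Finset.range (M₁+1), aa j y * (h:ℂ)^j) (Set.Ici a) :=
      (hA h hh).sub (hSM _ _)
    have hEq : Set.EqOn (A h)
        (fun y => (∑ j ∈ Finset.range (M₁+1), aa j y * (h:ℂ)^j)
          + (A h y - ∑ j ∈ Finset.range (M₁+1), aa j y * (h:ℂ)^j)) (Set.Ici a) :=
      fun y _ => by ring
    have e2 : iteratedDerivWithin 2 (A h) (Set.Ici a) x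
        = iteratedDerivWithin 2
            (fun y => ∑ j ∈ Finset.range (M₁+1), aa j y * (h:ℂ)^j) (Set.Ici a) x
          + iteratedDerivWithin 2
            (fun y => A h y - ∑ j ∈ Finset.range (M₁+1), aa j y * (h:ℂ)^j) (Set.Ici a) x := by
      rw [iteratedDerivWithin_congr hEq hx]
      exact Stmt11Aux.iter2_add_eq (hSM _ _) hRsm hx
    have e1 : derivWithin (A h) (Set.Ici a) x
        = derivWithin
            (fun y => ∑ j ∈ Finset.range (M₁+1), aa j y * (h:ℂ)^j) (Set.Ici a) x
          + derivWithin
            (fun y => A h y - ∑ j ∈ Finset.range (M₁+1), aa j y * (h:ℂ)^j) (Set.Ici a) x := by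
      rw [derivWithin_congr hEq (hEq hx)]
      exact Stmt11Aux.deriv_add_eq (hSM _ _) hRsm hx
    have hsplit : -(h:ℂ)^2 * iteratedDerivWithin 2 (A h) (Set.Ici a) x
        + (h:ℂ) * (2 * ψ x * derivWithin (A h) (Set.Ici a) x
          + derivWithin ψ (Set.Ici a) x * A h x)
      = -(h:ℂ)^(M₁+2) * iteratedDerivWithin 2 (aa M₁) (Set.Ici a) x
        + (-(h:ℂ)^2 * iteratedDerivWithin 2
              (fun y => A h y - ∑ j ∈ Finset.range (M₁+1), aa j y * (h:ℂ)^j) (Set.Ici a) x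
          + (h:ℂ) * (2 * ψ x * derivWithin
                (fun y => A h y - ∑ j ∈ Finset.range (M₁+1), aa j y * (h:ℂ)^j) (Set.Ici a) x
            + derivWithin ψ (Set.Ici a) x
              * (A h x - ∑ j ∈ Finset.range (M₁+1), aa j x * (h:ℂ)^j))) := by
      rw [e2, e1]
      linear_combination htel h M₁ x hx
    rw [hsplit]
    -- individual bounds
    have hT1 := hC1b x hx
    have hT2 := hC2b h hh x hx
    have hT3 := hC3b h hh x hx
    have hT4 := hC4b h hh x hx
    rw [iteratedDerivWithin_one] at hT3
    rw [iteratedDerivWithin_zero] at hT4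
    have hψu := hψub x hx
    have hψ'u := hψ'b x hx
    have b1 : ‖-(h:ℂ)^(M₁+2) * iteratedDerivWithin 2 (aa M₁) (Set.Ici a) x‖
        ≤ C1 * (h^(M₁+2) * Real.sqrt (1 + x^2) ^ (m₀/4 - ((M₁:ℝ)+1)*(m₀/2+1) - 1)) := by
      rw [norm_mul, norm_neg, hnc]
      have hT1' : ‖iteratedDerivWithin 2 (aa M₁) (Set.Ici a) x‖
          ≤ C1 * Real.sqrt (1 + x^2) ^ (m₀/4 - ((M₁:ℝ)+1)*(m₀/2+1) - 1) := by
        rw [show m₀/4 - ((M₁:ℝ)+1)*(m₀/2+1) - 1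
            = -(m₀/4) - (M₁:ℝ)*(m₀/2+1) - ((2:ℕ):ℝ) by push_cast; ring]
        exact hT1
      calc h^(M₁+2) * ‖iteratedDerivWithin 2 (aa M₁) (Set.Ici a) x‖
          ≤ h^(M₁+2) * (C1 * Real.sqrt (1 + x^2) ^ (m₀/4 - ((M₁:ℝ)+1)*(m₀/2+1) - 1)) :=
            mul_le_mul_of_nonneg_left hT1' (by positivity)
        _ = C1 * (h^(M₁+2) * Real.sqrt (1 + x^2) ^ (m₀/4 - ((M₁:ℝ)+1)*(m₀/2+1) - 1)) := by
            ring
    have b2 : ‖-(h:ℂ)^2 * iteratedDerivWithin 2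
          (fun y => A h y - ∑ j ∈ Finset.range (M₁+1), aa j y * (h:ℂ)^j) (Set.Ici a) x‖
        ≤ (h₀*C2) * (h^(M₁+2) * Real.sqrt (1 + x^2) ^ (m₀/4 - ((M₁:ℝ)+1)*(m₀/2+1) - 1)) := by
      rw [norm_mul, norm_neg, hnc]
      have hT2' : ‖iteratedDerivWithin 2
            (fun y => A h y - ∑ j ∈ Finset.range (M₁+1), aa j y * (h:ℂ)^j) (Set.Ici a) x‖
          ≤ C2 * h^(M₁+1) * Real.sqrt (1 + x^2) ^ (m₀/4 - ((M₁:ℝ)+1)*(m₀/2+1) - 1) := by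
        refine le_trans hT2 ?_
        have hexp : Real.sqrt (1 + x^2) ^ (-(m₀/4) - ((M₁+1:ℕ):ℝ)*(m₀/2+1) - ((2:ℕ):ℝ))
            ≤ Real.sqrt (1 + x^2) ^ (m₀/4 - ((M₁:ℝ)+1)*(m₀/2+1) - 1) :=
          Real.rpow_le_rpow_of_exponent_le (hw1 x) (by push_cast; linarith)
        exact mul_le_mul_of_nonneg_left hexp (by positivity)
      calc h^2 * ‖iteratedDerivWithin 2
            (fun y => A h y - ∑ j ∈ Finset.range (M₁+1), aa j y * (h:ℂ)^j) (Set.Ici a) x‖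
          ≤ h^2 * (C2 * h^(M₁+1)
              * Real.sqrt (1 + x^2) ^ (m₀/4 - ((M₁:ℝ)+1)*(m₀/2+1) - 1)) :=
            mul_le_mul_of_nonneg_left hT2' (by positivity)
        _ = C2 * (h * h^(M₁+2))
              * Real.sqrt (1 + x^2) ^ (m₀/4 - ((M₁:ℝ)+1)*(m₀/2+1) - 1) := by ring
        _ ≤ C2 * (h₀ * h^(M₁+2))
              * Real.sqrt (1 + x^2) ^ (m₀/4 - ((M₁:ℝ)+1)*(m₀/2+1) - 1) := by
            gcongr
            exact hh.2
        _ = (h₀*C2) * (h^(M₁+2)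
              * Real.sqrt (1 + x^2) ^ (m₀/4 - ((M₁:ℝ)+1)*(m₀/2+1) - 1)) := by ring
    have b3 : ‖(h:ℂ) * (2 * ψ x * derivWithin
            (fun y => A h y - ∑ j ∈ Finset.range (M₁+1), aa j y * (h:ℂ)^j) (Set.Ici a) x
          + derivWithin ψ (Set.Ici a) x
            * (A h x - ∑ j ∈ Finset.range (M₁+1), aa j x * (h:ℂ)^j))‖
        ≤ (2*(Real.sqrt (CV + ‖E‖))*C3 + (CV1 * Real.sqrt C₀ / 2)*C4)
            * (h^(M₁+2) * Real.sqrt (1 + x^2) ^ (m₀/4 - ((M₁:ℝ)+1)*(m₀/2+1) - 1)) := by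
      rw [norm_mul, hnc1]
      have tri : ‖2 * ψ x * derivWithin
            (fun y => A h y - ∑ j ∈ Finset.range (M₁+1), aa j y * (h:ℂ)^j) (Set.Ici a) x
          + derivWithin ψ (Set.Ici a) x
            * (A h x - ∑ j ∈ Finset.range (M₁+1), aa j x * (h:ℂ)^j)‖
          ≤ 2 * ‖ψ x‖ * ‖derivWithin
              (fun y => A h y - ∑ j ∈ Finset.range (M₁+1), aa j y * (h:ℂ)^j) (Set.Ici a) x‖
            + ‖derivWithin ψ (Set.Ici a) x‖
              * ‖A h x - ∑ j ∈ Finset.range (M₁+1), aa j x * (h:ℂ)^j‖ := by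
        refine le_trans (norm_add_le _ _) (le_of_eq ?_)
        rw [norm_mul, norm_mul, norm_mul]
        norm_num
      calc h * ‖2 * ψ x * derivWithin
            (fun y => A h y - ∑ j ∈ Finset.range (M₁+1), aa j y * (h:ℂ)^j) (Set.Ici a) x
          + derivWithin ψ (Set.Ici a) x
            * (A h x - ∑ j ∈ Finset.range (M₁+1), aa j x * (h:ℂ)^j)‖
          ≤ h * (2 * ‖ψ x‖ * ‖derivWithin
              (fun y => A h y - ∑ j ∈ Finset.range (M₁+1), aa j y * (h:ℂ)^j) (Set.Ici a) x‖
            + ‖derivWithin ψ (Set.Ici a) x‖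
              * ‖A h x - ∑ j ∈ Finset.range (M₁+1), aa j x * (h:ℂ)^j‖) :=
            mul_le_mul_of_nonneg_left tri hhpos.le
        _ ≤ h * (2 * (Real.sqrt (CV + ‖E‖) * Real.sqrt (1 + x^2) ^ (m₀/2))
              * (C3 * h^(M₁+1) * Real.sqrt (1 + x^2)
                  ^ (-(m₀/4) - ((M₁+1:ℕ):ℝ)*(m₀/2+1) - ((1:ℕ):ℝ)))
            + ((CV1 * Real.sqrt C₀ / 2) * Real.sqrt (1 + x^2) ^ (m₀/2 - 1))
              * (C4 * h^(M₁+1) * Real.sqrt (1 + x^2)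
                  ^ (-(m₀/4) - ((M₁+1:ℕ):ℝ)*(m₀/2+1) - ((0:ℕ):ℝ)))) := by
            gcongr
        _ = 2*(Real.sqrt (CV + ‖E‖))*C3 * (h * h^(M₁+1))
              * (Real.sqrt (1 + x^2) ^ (m₀/2) * Real.sqrt (1 + x^2)
                  ^ (-(m₀/4) - ((M₁+1:ℕ):ℝ)*(m₀/2+1) - ((1:ℕ):ℝ)))
            + (CV1 * Real.sqrt C₀ / 2)*C4 * (h * h^(M₁+1))
              * (Real.sqrt (1 + x^2) ^ (m₀/2 - 1) * Real.sqrt (1 + x^2)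
                  ^ (-(m₀/4) - ((M₁+1:ℕ):ℝ)*(m₀/2+1) - ((0:ℕ):ℝ))) := by ring
        _ = (2*(Real.sqrt (CV + ‖E‖))*C3 + (CV1 * Real.sqrt C₀ / 2)*C4)
              * (h^(M₁+2) * Real.sqrt (1 + x^2) ^ (m₀/4 - ((M₁:ℝ)+1)*(m₀/2+1) - 1)) := by
            rw [← Real.rpow_add (hw0 x), ← Real.rpow_add (hw0 x),
              show m₀/2 + (-(m₀/4) - ((M₁+1:ℕ):ℝ)*(m₀/2+1) - ((1:ℕ):ℝ))
                  = m₀/4 - ((M₁:ℝ)+1)*(m₀/2+1) - 1 by push_cast; ring,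
              show m₀/2 - 1 + (-(m₀/4) - ((M₁+1:ℕ):ℝ)*(m₀/2+1) - ((0:ℕ):ℝ))
                  = m₀/4 - ((M₁:ℝ)+1)*(m₀/2+1) - 1 by push_cast; ring]
            ring
    -- combine
    have hγN : m₀/4 - ((M₁:ℝ)+1)*(m₀/2+1) - 1 ≤ -(N:ℝ) := by
      have hc : m₀/4 ≤ (Nat.ceil (m₀/4) : ℝ) := Nat.le_ceil _
      have hM₁r : (N:ℝ) + m₀/4 ≤ (M₁:ℝ) := by
        rw [hM₁def]
        push_cast
        linarith
      have h1 : ((M₁:ℝ)+1) ≤ ((M₁:ℝ)+1)*(m₀/2+1) :=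
        le_mul_of_one_le_right (by positivity) (by linarith)
      linarith
    have hwγ : Real.sqrt (1 + x^2) ^ (m₀/4 - ((M₁:ℝ)+1)*(m₀/2+1) - 1)
        ≤ Real.sqrt (1 + x^2) ^ (-(N:ℝ)) :=
      Real.rpow_le_rpow_of_exponent_le (hw1 x) hγN
    have hpow : h^(M₁+2) ≤ h₀^(M₁+2-N) * h^N := by
      have e : M₁+2 = (M₁+2-N) + N := by omega
      conv_lhs => rw [e, pow_add]
      exact mul_le_mul_of_nonneg_right (pow_le_pow_left₀ hhpos.le hh.2 _) (by positivity)
    calc ‖-(h:ℂ)^(M₁+2) * iteratedDerivWithin 2 (aa M₁) (Set.Ici a) x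
        + (-(h:ℂ)^2 * iteratedDerivWithin 2
              (fun y => A h y - ∑ j ∈ Finset.range (M₁+1), aa j y * (h:ℂ)^j) (Set.Ici a) x
          + (h:ℂ) * (2 * ψ x * derivWithin
                (fun y => A h y - ∑ j ∈ Finset.range (M₁+1), aa j y * (h:ℂ)^j) (Set.Ici a) x
            + derivWithin ψ (Set.Ici a) x
              * (A h x - ∑ j ∈ Finset.range (M₁+1), aa j x * (h:ℂ)^j)))‖
        ≤ ‖-(h:ℂ)^(M₁+2) * iteratedDerivWithin 2 (aa M₁) (Set.Ici a) x‖
          + (‖-(h:ℂ)^2 * iteratedDerivWithin 2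
              (fun y => A h y - ∑ j ∈ Finset.range (M₁+1), aa j y * (h:ℂ)^j) (Set.Ici a) x‖
            + ‖(h:ℂ) * (2 * ψ x * derivWithin
                (fun y => A h y - ∑ j ∈ Finset.range (M₁+1), aa j y * (h:ℂ)^j) (Set.Ici a) x
              + derivWithin ψ (Set.Ici a) x
                * (A h x - ∑ j ∈ Finset.range (M₁+1), aa j x * (h:ℂ)^j))‖) :=
          le_trans (norm_add_le _ _) (add_le_add le_rfl (norm_add_le _ _))
      _ ≤ (C1 + h₀*C2 + 2*(Real.sqrt (CV + ‖E‖))*C3 + (CV1 * Real.sqrt C₀ / 2)*C4)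
            * (h^(M₁+2) * Real.sqrt (1 + x^2) ^ (m₀/4 - ((M₁:ℝ)+1)*(m₀/2+1) - 1)) := by
          have := add_le_add b1 (add_le_add b2 b3)
          refine le_trans this (le_of_eq ?_)
          ring
      _ ≤ (C1 + h₀*C2 + 2*(Real.sqrt (CV + ‖E‖))*C3 + (CV1 * Real.sqrt C₀ / 2)*C4)
            * ((h₀^(M₁+2-N) * h^N) * Real.sqrt (1 + x^2) ^ (-(N:ℝ))) := by
          gcongr
      _ = (C1 + h₀*C2 + 2*(Real.sqrt (CV + ‖E‖))*C3 + (CV1 * Real.sqrt C₀ / 2)*C4)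
            * h₀^(M₁+2-N) * h^N * Real.sqrt (1 + x^2) ^ (-(N:ℝ)) := by ring
end

section
/- Let V be a real-analytic real-valued function on an open interval containing [α₀, β₀], and let E₀ ∈ ℝ satisfy V(α₀) = V(β₀) = E₀, V′(α₀) < 0, V′(β₀) > 0, and V(x) < E₀ for all x ∈ (α₀, β₀). For E real near E₀, let α(E) < β(E) denote the unique solutions of V(x) = E near α₀ and β₀ respectively (given by the implicit function theorem, so α, β are real-analytic with α(E₀) = α₀, β(E₀) = β₀), and define the action integral I(E) = ∫_{α(E)}^{β(E)} (E − V(x))^{1/2} dx. Then for each real E near E₀ the integral ∫_{α(E)}^{β(E)} (E − V(x))^{−1/2} dx converges, I is differentiable at E with I′(E) = (1/2) ∫_{α(E)}^{β(E)} (E − V(x))^{−1/2} dx, and in particular I′(E) > 0. -/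
/-!
Because `Real.sqrt` vanishes on negative numbers and `V ≥ E` outside the turning points, the action
is `I(E) = ∫_A^B √(E - V)` over one fixed interval `[A, B]` around the well, for every `E` near
`E₀`. Differentiation under the integral sign is justified by `|√s - √t| ≤ |s - t| / √|t|`, which
dominates the difference quotients by `|E - V x|^{-1/2}`. This is integrable because the simple
turning points and the gap below `E₀` in the middle of the well give
`|E - V x| ≥ k · min |x - α(E)| |x - β(E)|`. The derivative `(1/2) ∫ (E - V)^{-1/2}` again only
sees `[α(E), β(E)]`, where its integrand is positive.
-/

open Real Set Filter Topology MeasureTheory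

theorem hasDerivAt_integral_of_dominated_loc_of_lip' {X : Type*} [MeasurableSpace X]
    {μ : Measure X} {F : ℝ → X → ℝ} {F' bound : X → ℝ} {x₀ : ℝ} {s : Set ℝ} (hs : s ∈ 𝓝 x₀)
    (hF_meas : ∀ x ∈ s, AEStronglyMeasurable (F x) μ) (hF_int : Integrable (F x₀) μ)
    (hF'_meas : AEStronglyMeasurable F' μ)
    (h_lipsch : ∀ᵐ a ∂μ, ∀ x ∈ s, ‖F x a - F x₀ a‖ ≤ bound a * ‖x - x₀‖)
    (bound_integrable : Integrable bound μ)
    (h_diff : ∀ᵐ a ∂μ, HasDerivAt (F · a) (F' a) x₀) :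
    HasDerivAt (fun x ↦ ∫ a, F x a ∂μ) (∫ a, F' a ∂μ) x₀ := by
  have key := (hasFDerivAt_integral_of_dominated_loc_of_lip'
    (F' := fun a ↦ F' a • (1 : ℝ →L[ℝ] ℝ)) hs hF_meas hF_int (hF'_meas.smul_const _) h_lipsch
    bound_integrable (h_diff.mono fun a ha ↦ ha.hasFDerivAt.congr_fderiv (by ext; simp))).2
  simpa [integral_smul_const] using key.hasDerivAt

namespace Real

theorem abs_sqrt_sub_sqrt_le {x y : ℝ} (hy : y ≠ 0) : |√x - √y| ≤ (√|y|)⁻¹ * |x - y| := by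
  rw [← div_eq_inv_mul, le_div_iff₀ (by positivity)]
  rcases hy.lt_or_gt with hy | hy
  · rw [sqrt_eq_zero_of_nonpos hy.le, sub_zero, abs_of_nonneg (sqrt_nonneg x), abs_of_neg hy]
    rcases le_or_gt x 0 with hx | hx
    · rw [sqrt_eq_zero_of_nonpos hx, zero_mul]
      positivity
    · rw [abs_of_pos (by linarith)]
      nlinarith [sq_nonneg (√x - √(-y)), sq_sqrt hx.le, sq_sqrt (neg_nonneg.2 hy.le)]
  · rw [abs_of_pos hy]
    rcases le_or_gt x 0 with hx | hx
    · rw [sqrt_eq_zero_of_nonpos hx, zero_sub, abs_neg, abs_of_nonneg (sqrt_nonneg y),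
        mul_self_sqrt hy.le, abs_of_neg (by linarith)]
      linarith
    · have h : (√x - √y) * (√x + √y) = x - y := by nlinarith [sq_sqrt hx.le, sq_sqrt hy.le]
      rw [← h, abs_mul, abs_of_pos (by positivity : 0 < √x + √y)]
      gcongr
      linarith [sqrt_nonneg x]

theorem inv_sqrt_eq_rpow (x : ℝ) : (√x)⁻¹ = x ^ (-(1 / 2) : ℝ) := by
  rcases le_or_gt 0 x with hx | hx
  · rw [sqrt_eq_rpow, ← rpow_neg hx]
  · rw [sqrt_eq_zero_of_nonpos hx.le, inv_zero, rpow_def_of_neg hx, neg_mul, cos_neg,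
      one_div_mul_eq_div, cos_pi_div_two, mul_zero]

theorem inv_sqrt_abs (u : ℝ) : (√|u|)⁻¹ = (√u)⁻¹ + (√(-u))⁻¹ := by
  rcases le_total 0 u with hu | hu
  · rw [abs_of_nonneg hu, sqrt_eq_zero_of_nonpos (neg_nonpos.2 hu), inv_zero, add_zero]
  · rw [abs_of_nonpos hu, sqrt_eq_zero_of_nonpos hu, inv_zero, zero_add]

theorem inv_sqrt_abs_le_of_mul_min_le {k u v w : ℝ} (hk : 0 < k) (hv : v ≠ 0) (hw : w ≠ 0)
    (h : k * min |v| |w| ≤ |u|) : (√|u|)⁻¹ ≤ (√k)⁻¹ * ((√|v|)⁻¹ + (√|w|)⁻¹) := by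
  have hmin : 0 < min |v| |w| := lt_min (abs_pos.2 hv) (abs_pos.2 hw)
  calc (√|u|)⁻¹ ≤ (√(k * min |v| |w|))⁻¹ := by gcongr
    _ = (√k)⁻¹ * (√(min |v| |w|))⁻¹ := by rw [sqrt_mul hk.le, mul_inv]
    _ ≤ (√k)⁻¹ * ((√|v|)⁻¹ + (√|w|)⁻¹) := by
      gcongr
      rcases min_choice |v| |w| with hm | hm <;> rw [hm]
      · exact le_add_of_nonneg_right (by positivity)
      · exact le_add_of_nonneg_left (by positivity)

end Real

/-- Where `V x > E` the integrand is locally `0` in `E`, in agreement with `(√(E - V x))⁻¹ = 0`. -/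
theorem hasDerivAt_integral_sqrt_sub {X : Type*} [MeasurableSpace X] {μ : Measure X}
    {V : X → ℝ} {E : ℝ} (hV : AEMeasurable V μ) (hint : Integrable (fun x ↦ √(E - V x)) μ)
    (hbound : Integrable (fun x ↦ (√|E - V x|)⁻¹) μ) (hne : ∀ᵐ x ∂μ, V x ≠ E) :
    HasDerivAt (fun E' ↦ ∫ x, √(E' - V x) ∂μ) ((1 / 2) * ∫ x, (√(E - V x))⁻¹ ∂μ) E := by
  rw [← integral_const_mul]
  refine hasDerivAt_integral_of_dominated_loc_of_lip' univ_mem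
    (fun E' _ ↦ (hV.const_sub E').sqrt.aestronglyMeasurable) hint
    ((hV.const_sub E).sqrt.inv.const_mul _).aestronglyMeasurable ?_ hbound ?_
  · filter_upwards [hne] with x hx E' _
    simpa only [Real.norm_eq_abs, sub_sub_sub_cancel_right] using
      Real.abs_sqrt_sub_sqrt_le (x := E' - V x) (sub_ne_zero.2 hx.symm)
  · filter_upwards [hne] with x hx
    convert ((hasDerivAt_id' E).sub_const (V x)).sqrt (sub_ne_zero.2 hx.symm) using 1
    ring

theorem intervalIntegrable_inv_sqrt (s t : ℝ) :
    IntervalIntegrable (fun x ↦ (√x)⁻¹) volume s t := by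
  simpa only [Real.inv_sqrt_eq_rpow] using intervalIntegral.intervalIntegrable_rpow' (by norm_num)

theorem intervalIntegrable_inv_sqrt_abs_sub (a s t : ℝ) :
    IntervalIntegrable (fun x ↦ (√|x - a|)⁻¹) volume s t := by
  simp only [Real.inv_sqrt_abs, neg_sub]
  refine IntervalIntegrable.add ?_ ?_
  · simpa using (intervalIntegrable_inv_sqrt (s - a) (t - a)).comp_sub_right a
  · simpa using (intervalIntegrable_inv_sqrt (a - s) (a - t)).comp_sub_left a

theorem intervalIntegrable_inv_sqrt_abs_of_mul_min_le {g : ℝ → ℝ} {s t a b k : ℝ} (hk : 0 < k)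
    (hg : ContinuousOn g (uIcc s t)) (h : ∀ x ∈ uIcc s t, k * min |x - a| |x - b| ≤ |g x|) :
    IntervalIntegrable (fun x ↦ (√|g x|)⁻¹) volume s t := by
  refine (((intervalIntegrable_inv_sqrt_abs_sub a s t).add
    (intervalIntegrable_inv_sqrt_abs_sub b s t)).const_mul (√k)⁻¹).mono_fun' ?_ ?_
  · exact ((hg.mono uIoc_subset_uIcc).aemeasurable
      measurableSet_uIoc).abs.sqrt.inv.aestronglyMeasurable
  · filter_upwards [ae_restrict_mem measurableSet_uIoc,
      (Measure.ae_ne volume a).filter_mono ae_restrict_le,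
      (Measure.ae_ne volume b).filter_mono ae_restrict_le] with x hx hxa hxb
    rw [Real.norm_eq_abs, abs_of_nonneg (by positivity)]
    exact Real.inv_sqrt_abs_le_of_mul_min_le hk (sub_ne_zero.2 hxa) (sub_ne_zero.2 hxb)
      (h x (uIoc_subset_uIcc hx))

theorem intervalIntegral.integral_eq_of_eqOn_zero {f : ℝ → ℝ} {A a b B : ℝ} (hA : A ≤ a)
    (hab : a ≤ b) (hB : b ≤ B) (hl : EqOn f 0 (Icc A a)) (hr : EqOn f 0 (Icc b B)) :
    ∫ x in A..B, f x = ∫ x in a..b, f x := by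
  rw [integral_of_le (hA.trans (hab.trans hB)), integral_of_le hab]
  refine setIntegral_eq_of_subset_of_forall_sdiff_eq_zero measurableSet_Ioc
    (Ioc_subset_Ioc hA hB) fun x ⟨⟨hAx, hxB⟩, hx⟩ ↦ ?_
  rcases le_or_gt x a with hxa | hax
  · exact hl ⟨hAx.le, hxa⟩
  · exact hr ⟨le_of_not_ge fun hxb ↦ hx ⟨hax, hxb⟩, hxB⟩

structure IsPotentialWell (V : ℝ → ℝ) (A p q B c h : ℝ) : Prop where
  pos : 0 < c
  le : p ≤ q
  continuousOn : ContinuousOn V (Icc A B)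
  differentiableOn_left : DifferentiableOn ℝ V (Icc A p)
  differentiableOn_right : DifferentiableOn ℝ V (Icc q B)
  deriv_le_left : ∀ x ∈ Icc A p, deriv V x ≤ -c
  le_deriv_right : ∀ x ∈ Icc q B, c ≤ deriv V x
  le_of_mem_Icc : ∀ x ∈ Icc p q, V x ≤ h

namespace IsPotentialWell

variable {V : ℝ → ℝ} {A p q B c h a b E x : ℝ}

theorem mul_sub_le_left (hw : IsPotentialWell V A p q B c h) {y : ℝ} (hx : x ∈ Icc A p)
    (hy : y ∈ Icc A p) (hxy : x ≤ y) : c * (y - x) ≤ V x - V y := by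
  have := (convex_Icc A p).image_sub_le_mul_sub_of_deriv_le
    hw.differentiableOn_left.continuousOn (hw.differentiableOn_left.mono interior_subset)
    (fun z hz ↦ hw.deriv_le_left z (interior_subset hz)) x hx y hy hxy
  linarith

theorem mul_sub_le_right (hw : IsPotentialWell V A p q B c h) {y : ℝ} (hx : x ∈ Icc q B)
    (hy : y ∈ Icc q B) (hxy : x ≤ y) : c * (y - x) ≤ V y - V x :=
  (convex_Icc q B).mul_sub_le_image_sub_of_le_deriv hw.differentiableOn_right.continuousOn
    (hw.differentiableOn_right.mono interior_subset)
    (fun z hz ↦ hw.le_deriv_right z (interior_subset hz)) x hx y hy hxy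

theorem mul_sub_le_sub_left (hw : IsPotentialWell V A p q B c h) (ha : a ∈ Icc A p)
    (hVa : V a = E) (hx : x ∈ Icc A a) : c * (a - x) ≤ V x - E :=
  hVa ▸ hw.mul_sub_le_left ⟨hx.1, hx.2.trans ha.2⟩ ha hx.2

theorem mul_sub_le_sub_right (hw : IsPotentialWell V A p q B c h) (hb : b ∈ Icc q B)
    (hVb : V b = E) (hx : x ∈ Icc b B) : c * (x - b) ≤ V x - E :=
  hVb ▸ hw.mul_sub_le_right hb ⟨hb.1.trans hx.1, hx.2⟩ hx.1

theorem mul_min_le_sub (hw : IsPotentialWell V A p q B c h) (hE : h ≤ E)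
    (ha : a ∈ Icc A p) (hb : b ∈ Icc q B) (hVa : V a = E) (hVb : V b = E) (hx : x ∈ Icc a b) :
    min c ((E - h) / (B - A)) * min (x - a) (b - x) ≤ E - V x := by
  have hmin : 0 ≤ min (x - a) (b - x) := le_min (by linarith [hx.1]) (by linarith [hx.2])
  set k := min c ((E - h) / (B - A))
  rcases le_or_gt x p with hxp | hpx
  · calc k * min (x - a) (b - x) ≤ c * (x - a) :=
          mul_le_mul (min_le_left _ _) (min_le_left _ _) hmin hw.pos.le
      _ ≤ E - V x := by linarith [hw.mul_sub_le_left ha ⟨ha.1.trans hx.1, hxp⟩ hx.1]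
  rcases le_or_gt q x with hqx | hxq
  · calc k * min (x - a) (b - x) ≤ c * (b - x) :=
          mul_le_mul (min_le_left _ _) (min_le_right _ _) hmin hw.pos.le
      _ ≤ E - V x := by linarith [hw.mul_sub_le_right ⟨hqx, hx.2.trans hb.2⟩ hb hx.2]
  have hAB : 0 < B - A := by linarith [ha.1, hx.1, hb.1, hb.2]
  calc k * min (x - a) (b - x) ≤ (E - h) / (B - A) * (B - A) :=
        mul_le_mul (min_le_right _ _) (by linarith [min_le_left (x - a) (b - x), ha.1, hx.2, hb.2])
          hmin (div_nonneg (by linarith) hAB.le)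
    _ ≤ E - V x := by
        rw [div_mul_cancel₀ _ hAB.ne']
        linarith [hw.le_of_mem_Icc x ⟨hpx.le, hxq.le⟩]

theorem mul_min_abs_le_abs (hw : IsPotentialWell V A p q B c h) (hE : h ≤ E)
    (ha : a ∈ Icc A p) (hb : b ∈ Icc q B) (hVa : V a = E) (hVb : V b = E) (hx : x ∈ Icc A B) :
    min c ((E - h) / (B - A)) * min |x - a| |x - b| ≤ |E - V x| := by
  set k := min c ((E - h) / (B - A))
  have hk : k ≤ c := min_le_left _ _
  rcases le_or_gt x a with hxa | hax
  · calc k * min |x - a| |x - b| ≤ c * (a - x) := by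
          refine mul_le_mul hk ((min_le_left _ _).trans_eq ?_) (by positivity) hw.pos.le
          rw [abs_of_nonpos (sub_nonpos.2 hxa), neg_sub]
      _ ≤ |E - V x| := by
          rw [abs_sub_comm]
          exact (hw.mul_sub_le_sub_left ha hVa ⟨hx.1, hxa⟩).trans (le_abs_self _)
  rcases le_or_gt b x with hbx | hxb
  · calc k * min |x - a| |x - b| ≤ c * (x - b) := by
          refine mul_le_mul hk ((min_le_right _ _).trans_eq ?_) (by positivity) hw.pos.le
          rw [abs_of_nonneg (sub_nonneg.2 hbx)]
      _ ≤ |E - V x| := by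
          rw [abs_sub_comm]
          exact (hw.mul_sub_le_sub_right hb hVb ⟨hbx, hx.2⟩).trans (le_abs_self _)
  rw [abs_of_pos (sub_pos.2 hax), abs_of_neg (sub_neg.2 hxb), neg_sub]
  exact (hw.mul_min_le_sub hE ha hb hVa hVb ⟨hax.le, hxb.le⟩).trans (le_abs_self _)

theorem lt_of_turning (hw : IsPotentialWell V A p q B c h) (hE : h < E) (ha : a ∈ Icc A p)
    (hb : b ∈ Icc q B) (hVa : V a = E) : a < b := by
  by_contra! hba
  have hap : a = p := le_antisymm ha.2 (hw.le.trans (hb.1.trans hba))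
  linarith [hw.le_of_mem_Icc a ⟨hap.ge, ha.2.trans hw.le⟩]

theorem sub_pos_of_mem_Ioo (hw : IsPotentialWell V A p q B c h) (hE : h < E)
    (ha : a ∈ Icc A p) (hb : b ∈ Icc q B) (hVa : V a = E) (hVb : V b = E) (hx : x ∈ Ioo a b) :
    0 < E - V x := by
  have hAB : A < B := by linarith [ha.1, hb.2, hw.lt_of_turning hE ha hb hVa]
  refine lt_of_lt_of_le (mul_pos (lt_min hw.pos (div_pos (sub_pos.2 hE) (sub_pos.2 hAB)))
    (lt_min (sub_pos.2 hx.1) (sub_pos.2 hx.2))) (hw.mul_min_le_sub hE.le ha hb hVa hVb ?_)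
  exact Ioo_subset_Icc_self hx

theorem integral_comp_sub_eq (hw : IsPotentialWell V A p q B c h) (ha : a ∈ Icc A p)
    (hb : b ∈ Icc q B) (hVa : V a = E) (hVb : V b = E) {g : ℝ → ℝ} (hg : ∀ t ≤ 0, g t = 0) :
    ∫ x in A..B, g (E - V x) = ∫ x in a..b, g (E - V x) := by
  refine intervalIntegral.integral_eq_of_eqOn_zero ha.1 (ha.2.trans (hw.le.trans hb.1)) hb.2
    (fun x hx ↦ hg _ ?_) (fun x hx ↦ hg _ ?_)
  · nlinarith [hw.mul_sub_le_sub_left ha hVa hx, hx.2, hw.pos]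
  · nlinarith [hw.mul_sub_le_sub_right hb hVb hx, hx.1, hw.pos]

theorem intervalIntegrable_inv_sqrt_abs (hw : IsPotentialWell V A p q B c h) (hE : h < E)
    (ha : a ∈ Icc A p) (hb : b ∈ Icc q B) (hVa : V a = E) (hVb : V b = E) :
    IntervalIntegrable (fun x ↦ (√|E - V x|)⁻¹) volume A B := by
  have hAB : A < B := by linarith [ha.1, hb.2, hw.lt_of_turning hE ha hb hVa]
  refine intervalIntegrable_inv_sqrt_abs_of_mul_min_le (a := a) (b := b)
    (lt_min hw.pos (div_pos (sub_pos.2 hE) (sub_pos.2 hAB))) ?_ fun x hx ↦ ?_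
  · rw [uIcc_of_le hAB.le]
    exact continuousOn_const.sub hw.continuousOn
  · rw [uIcc_of_le hAB.le] at hx
    exact hw.mul_min_abs_le_abs hE.le ha hb hVa hVb hx

theorem intervalIntegrable_inv_sqrt (hw : IsPotentialWell V A p q B c h) (hE : h < E)
    (ha : a ∈ Icc A p) (hb : b ∈ Icc q B) (hVa : V a = E) (hVb : V b = E) :
    IntervalIntegrable (fun x ↦ (√(E - V x))⁻¹) volume a b := by
  have hab := hw.lt_of_turning hE ha hb hVa
  have hAB : A ≤ B := by linarith [ha.1, hb.2]
  refine ((hw.intervalIntegrable_inv_sqrt_abs hE ha hb hVa hVb).mono_fun' ?_ ?_).mono_set ?_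
  · exact ((continuousOn_const.sub (hw.continuousOn.mono (uIoc_subset_uIcc.trans
      (uIcc_of_le hAB).subset))).aemeasurable measurableSet_uIoc).sqrt.inv.aestronglyMeasurable
  · refine Eventually.of_forall fun x ↦ ?_
    dsimp only
    rw [Real.norm_eq_abs, abs_of_nonneg (by positivity), Real.inv_sqrt_abs (E - V x)]
    exact le_add_of_nonneg_right (by positivity)
  · rw [uIcc_of_le hab.le, uIcc_of_le hAB]
    exact Icc_subset_Icc ha.1 hb.2

theorem integral_inv_sqrt_pos (hw : IsPotentialWell V A p q B c h) (hE : h < E)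
    (ha : a ∈ Icc A p) (hb : b ∈ Icc q B) (hVa : V a = E) (hVb : V b = E) :
    0 < ∫ x in a..b, (√(E - V x))⁻¹ :=
  intervalIntegral.intervalIntegral_pos_of_pos_on
    (hw.intervalIntegrable_inv_sqrt hE ha hb hVa hVb)
    (fun _ hx ↦ inv_pos.2 (sqrt_pos.2 (hw.sub_pos_of_mem_Ioo hE ha hb hVa hVb hx)))
    (hw.lt_of_turning hE ha hb hVa)

theorem hasDerivAt_integral_sqrt_sub (hw : IsPotentialWell V A p q B c h) (hE : h < E)
    (ha : a ∈ Icc A p) (hb : b ∈ Icc q B) (hVa : V a = E) (hVb : V b = E) :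
    HasDerivAt (fun E' ↦ ∫ x in A..B, √(E' - V x))
      ((1 / 2) * ∫ x in A..B, (√(E - V x))⁻¹) E := by
  have hAB : A < B := by linarith [ha.1, hb.2, hw.lt_of_turning hE ha hb hVa]
  have hV : ContinuousOn V (Ioc A B) := hw.continuousOn.mono Ioc_subset_Icc_self
  simp only [intervalIntegral.integral_of_le hAB.le]
  refine _root_.hasDerivAt_integral_sqrt_sub (hV.aemeasurable measurableSet_Ioc)
    ((continuousOn_const.sub hw.continuousOn).sqrt.integrableOn_Icc.mono_set Ioc_subset_Icc_self)
    ((intervalIntegrable_iff_integrableOn_Ioc_of_le hAB.le).1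
      (hw.intervalIntegrable_inv_sqrt_abs hE ha hb hVa hVb)) ?_
  have hk : 0 < min c ((E - h) / (B - A)) :=
    lt_min hw.pos (div_pos (sub_pos.2 hE) (sub_pos.2 hAB))
  filter_upwards [ae_restrict_mem measurableSet_Ioc,
    (Measure.ae_ne volume a).filter_mono ae_restrict_le,
    (Measure.ae_ne volume b).filter_mono ae_restrict_le] with x hx hxa hxb hVx
  have := hw.mul_min_abs_le_abs hE.le ha hb hVa hVb (Ioc_subset_Icc_self hx)
  rw [hVx, sub_self, abs_zero] at this
  exact (mul_pos hk (lt_min (abs_pos.2 (sub_ne_zero.2 hxa))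
    (abs_pos.2 (sub_ne_zero.2 hxb)))).not_ge this

theorem hasDerivAt_action (hw : IsPotentialWell V A p q B c h) {α β : ℝ → ℝ} (hE : h < E)
    (hturn : ∀ᶠ E' in 𝓝 E, α E' ∈ Icc A p ∧ β E' ∈ Icc q B ∧ V (α E') = E' ∧ V (β E') = E') :
    HasDerivAt (fun E' ↦ ∫ x in α E'..β E', √(E' - V x))
      ((1 / 2) * ∫ x in α E..β E, (√(E - V x))⁻¹) E := by
  obtain ⟨ha, hb, hVa, hVb⟩ := hturn.self_of_nhds
  rw [← hw.integral_comp_sub_eq ha hb hVa hVb (g := fun t ↦ (√t)⁻¹)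
    fun t ht ↦ by rw [sqrt_eq_zero_of_nonpos ht, inv_zero]]
  refine (hw.hasDerivAt_integral_sqrt_sub hE ha hb hVa hVb).congr_of_eventuallyEq ?_
  filter_upwards [hturn] with E' ⟨ha', hb', hVa', hVb'⟩
  exact (hw.integral_comp_sub_eq ha' hb' hVa' hVb' fun _ ↦ sqrt_eq_zero_of_nonpos).symm

end IsPotentialWell

theorem eventually_forall_mem_Icc {P : ℝ → Prop} {x : ℝ} (h : ∀ᶠ y in 𝓝 x, P y) :
    ∀ᶠ ε in 𝓝[>] 0, ∀ y ∈ Icc (x - ε) (x + ε), P y := by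
  obtain ⟨ε, hε, hP⟩ := (nhds_basis_Icc_pos x).eventually_iff.1 h
  filter_upwards [Ioo_mem_nhdsGT hε] with ε' hε' y hy
  exact hP ⟨by linarith [hy.1, hε'.2], by linarith [hy.2, hε'.2]⟩

theorem exists_pos_le_forall_mem_Ioo {P : ℝ → Prop} {x δ : ℝ} (hδ : 0 < δ)
    (h : ∀ᶠ y in 𝓝 x, P y) : ∃ δ' > 0, δ' ≤ δ ∧ ∀ y ∈ Ioo (x - δ') (x + δ'), P y := by
  obtain ⟨δ', hδ', hP⟩ := (nhds_basis_Ioo_pos x).eventually_iff.1 h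
  refine ⟨min δ' δ, lt_min hδ' hδ, min_le_right _ _, fun y hy ↦ hP ?_⟩
  exact Ioo_subset_Ioo (by linarith [min_le_left δ' δ]) (by linarith [min_le_left δ' δ]) hy

theorem exists_isPotentialWell {V : ℝ → ℝ} {U : Set ℝ} {α₀ β₀ E₀ : ℝ} (hαβ : α₀ < β₀)
    (hU : IsOpen U) (hIcc : Icc α₀ β₀ ⊆ U) (hV : DifferentiableOn ℝ V U)
    (hα' : ContinuousAt (deriv V) α₀) (hβ' : ContinuousAt (deriv V) β₀)
    (hV'α : deriv V α₀ < 0) (hV'β : 0 < deriv V β₀) (hVlt : ∀ x ∈ Ioo α₀ β₀, V x < E₀) :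
    ∃ ε > 0, ∃ c h, h < E₀ ∧ IsPotentialWell V (α₀ - ε) (α₀ + ε) (β₀ - ε) (β₀ + ε) c h := by
  have hev : ∀ᶠ ε in 𝓝[>] (0 : ℝ), 0 < ε ∧ ε < (β₀ - α₀) / 2 ∧
      (∀ y ∈ Icc (α₀ - ε) (α₀ + ε), y ∈ U ∧ deriv V y < deriv V α₀ / 2) ∧
      (∀ y ∈ Icc (β₀ - ε) (β₀ + ε), y ∈ U ∧ deriv V β₀ / 2 < deriv V y) := by
    filter_upwards [eventually_mem_nhdsWithin,
      nhdsWithin_le_nhds (eventually_lt_nhds (by linarith : (0 : ℝ) < (β₀ - α₀) / 2)),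
      eventually_forall_mem_Icc ((hU.eventually_mem (hIcc ⟨le_rfl, hαβ.le⟩)).and
        (hα'.eventually_lt_const (by linarith : deriv V α₀ < deriv V α₀ / 2))),
      eventually_forall_mem_Icc ((hU.eventually_mem (hIcc ⟨hαβ.le, le_rfl⟩)).and
        (hβ'.eventually_const_lt (by linarith : deriv V β₀ / 2 < deriv V β₀)))]
      with ε h₁ h₂ h₃ h₄ using ⟨h₁, h₂, h₃, h₄⟩
  obtain ⟨ε, hε, hεαβ, hl, hr⟩ := hev.exists
  have hK : Icc (α₀ - ε) (β₀ + ε) ⊆ U := fun x ⟨hx₁, hx₂⟩ ↦ by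
    rcases le_or_gt x (α₀ + ε) with hx | hx
    · exact (hl x ⟨hx₁, hx⟩).1
    rcases le_or_gt (β₀ - ε) x with hx' | hx'
    · exact (hr x ⟨hx', hx₂⟩).1
    exact hIcc ⟨by linarith, by linarith⟩
  have hmid : Icc (α₀ + ε) (β₀ - ε) ⊆ Ioo α₀ β₀ := fun x hx ↦
    ⟨by linarith [hx.1], by linarith [hx.2]⟩
  obtain ⟨x₀, hx₀, hmax⟩ := isCompact_Icc.exists_isMaxOn (nonempty_Icc.2 (by linarith))
    (hV.mono (hmid.trans (Ioo_subset_Icc_self.trans hIcc))).continuousOn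
  set c := min (-(deriv V α₀ / 2)) (deriv V β₀ / 2)
  have hcα : c ≤ -(deriv V α₀ / 2) := min_le_left _ _
  have hcβ : c ≤ deriv V β₀ / 2 := min_le_right _ _
  refine ⟨ε, hε, c, V x₀, hVlt x₀ (hmid hx₀),
    { pos := lt_min (by linarith) (by linarith)
      le := by linarith
      continuousOn := (hV.mono hK).continuousOn
      differentiableOn_left := hV.mono fun x hx ↦ hK ⟨hx.1, by linarith [hx.2]⟩
      differentiableOn_right := hV.mono fun x hx ↦ hK ⟨by linarith [hx.1], hx.2⟩
      deriv_le_left := fun x hx ↦ by linarith [(hl x hx).2]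
      le_deriv_right := fun x hx ↦ by linarith [(hr x hx).2]
      le_of_mem_Icc := fun x hx ↦ hmax hx }⟩

theorem stmt_14_general (V : ℝ → ℝ) (α₀ β₀ E₀ : ℝ) (hαβ : α₀ < β₀)
    (U : Set ℝ) (hU : IsOpen U) (hIcc : Set.Icc α₀ β₀ ⊆ U)
    (hV : AnalyticOnNhd ℝ V U)
    (hV'α : deriv V α₀ < 0) (hV'β : 0 < deriv V β₀)
    (hVlt : ∀ x ∈ Set.Ioo α₀ β₀, V x < E₀)
    (α β : ℝ → ℝ) (δ : ℝ) (hδ : 0 < δ)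
    (hα₀ : α E₀ = α₀) (hβ₀ : β E₀ = β₀)
    (hαc : ContinuousOn α (Set.Ioo (E₀ - δ) (E₀ + δ)))
    (hβc : ContinuousOn β (Set.Ioo (E₀ - δ) (E₀ + δ)))
    (hsol : ∀ E ∈ Set.Ioo (E₀ - δ) (E₀ + δ),
      V (α E) = E ∧ V (β E) = E ∧ α E < β E ∧ α E ∈ U ∧ β E ∈ U) :
    ∃ δ' > (0:ℝ), δ' ≤ δ ∧ ∀ E ∈ Set.Ioo (E₀ - δ') (E₀ + δ'),
      IntervalIntegrable (fun x => (Real.sqrt (E - V x))⁻¹)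
        MeasureTheory.volume (α E) (β E) ∧
      HasDerivAt (fun E' => ∫ x in α E'..β E', Real.sqrt (E' - V x))
        ((1/2) * ∫ x in α E..β E, (Real.sqrt (E - V x))⁻¹) E ∧
      0 < (1/2) * ∫ x in α E..β E, (Real.sqrt (E - V x))⁻¹ := by
  obtain ⟨ε, hε, c, h, hh, hw⟩ := exists_isPotentialWell hαβ hU hIcc hV.differentiableOn
    (hV.deriv α₀ (hIcc ⟨le_rfl, hαβ.le⟩)).continuousAt
    (hV.deriv β₀ (hIcc ⟨hαβ.le, le_rfl⟩)).continuousAt hV'α hV'β hVlt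
  have hδE₀ : ∀ᶠ E in 𝓝 E₀, E ∈ Ioo (E₀ - δ) (E₀ + δ) := Ioo_mem_nhds (by linarith) (by linarith)
  have hαE : ∀ᶠ E in 𝓝 E₀, α E ∈ Icc (α₀ - ε) (α₀ + ε) := (hαc.continuousAt hδE₀).eventually_mem
    (by rw [hα₀]; exact Icc_mem_nhds (by linarith) (by linarith))
  have hβE : ∀ᶠ E in 𝓝 E₀, β E ∈ Icc (β₀ - ε) (β₀ + ε) := (hβc.continuousAt hδE₀).eventually_mem
    (by rw [hβ₀]; exact Icc_mem_nhds (by linarith) (by linarith))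
  obtain ⟨δ', hδ', hδ'δ, hδ'E⟩ := exists_pos_le_forall_mem_Ioo hδ
    (hδE₀.and ((eventually_gt_nhds hh).and (hαE.and hβE)))
  have hturn : ∀ E ∈ Ioo (E₀ - δ') (E₀ + δ'), h < E ∧
      α E ∈ Icc (α₀ - ε) (α₀ + ε) ∧ β E ∈ Icc (β₀ - ε) (β₀ + ε) ∧ V (α E) = E ∧ V (β E) = E :=
    fun E hE ↦
      have ⟨hEδ, hhE, hαE, hβE⟩ := hδ'E E hE
      ⟨hhE, hαE, hβE, (hsol E hEδ).1, (hsol E hEδ).2.1⟩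
  refine ⟨δ', hδ', hδ'δ, fun E hE ↦ ?_⟩
  obtain ⟨hhE, ha, hb, hVa, hVb⟩ := hturn E hE
  exact ⟨hw.intervalIntegrable_inv_sqrt hhE ha hb hVa hVb,
    hw.hasDerivAt_action hhE (eventually_of_mem (isOpen_Ioo.mem_nhds hE) fun E' hE' ↦
      (hturn E' hE').2),
    mul_pos one_half_pos (hw.integral_inv_sqrt_pos hhE ha hb hVa hVb)⟩

/-- derivative of the action integral of a potential well. With `V`
real-analytic near `[α₀,β₀]`, `V(α₀) = V(β₀) = E₀`, `V′(α₀) < 0 < V′(β₀)`,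
`V < E₀` on `(α₀,β₀)`, and `α(E) < β(E)` the turning points near `α₀, β₀` at
energy `E` near `E₀`, the action `I(E) = ∫_{α(E)}^{β(E)} √(E − V)` satisfies:
`∫ (E − V)^{−1/2}` converges, `I′(E) = (1/2)∫_{α(E)}^{β(E)} (E − V(x))^{−1/2} dx`,
and in particular `I′(E) > 0`. -/
theorem stmt_14 (V : ℝ → ℝ) (α₀ β₀ E₀ : ℝ) (hαβ : α₀ < β₀)
    (U : Set ℝ) (hU : IsOpen U) (hIcc : Set.Icc α₀ β₀ ⊆ U)
    (hV : AnalyticOnNhd ℝ V U)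
    (hVα : V α₀ = E₀) (hVβ : V β₀ = E₀)
    (hV'α : deriv V α₀ < 0) (hV'β : 0 < deriv V β₀)
    (hVlt : ∀ x ∈ Set.Ioo α₀ β₀, V x < E₀)
    (α β : ℝ → ℝ) (δ : ℝ) (hδ : 0 < δ)
    (hα₀ : α E₀ = α₀) (hβ₀ : β E₀ = β₀)
    (hαc : ContinuousOn α (Set.Ioo (E₀ - δ) (E₀ + δ)))
    (hβc : ContinuousOn β (Set.Ioo (E₀ - δ) (E₀ + δ)))
    (hsol : ∀ E ∈ Set.Ioo (E₀ - δ) (E₀ + δ),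
      V (α E) = E ∧ V (β E) = E ∧ α E < β E ∧ α E ∈ U ∧ β E ∈ U) :
    ∃ δ' > (0:ℝ), δ' ≤ δ ∧ ∀ E ∈ Set.Ioo (E₀ - δ') (E₀ + δ'),
      IntervalIntegrable (fun x => (Real.sqrt (E - V x))⁻¹)
        MeasureTheory.volume (α E) (β E) ∧
      HasDerivAt (fun E' => ∫ x in α E'..β E', Real.sqrt (E' - V x))
        ((1/2) * ∫ x in α E..β E, (Real.sqrt (E - V x))⁻¹) E ∧
      0 < (1/2) * ∫ x in α E..β E, (Real.sqrt (E - V x))⁻¹ :=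
  stmt_14_general V α₀ β₀ E₀ hαβ U hU hIcc hV hV'α hV'β hVlt α β δ hδ hα₀ hβ₀ hαc hβc hsol
end

section
/- Let F_c ∈ ℝ, r > 0, let q be holomorphic and nonvanishing on the disc D(F_c, r) ⊂ ℂ, real-valued and strictly positive on D(F_c, r) ∩ ℝ, and for c ∈ ℝ define g_c(F) = c + q(F)(F − F_c)². Then for every ρ ∈ (0, r) there exists c₀ > 0 such that for all real c with |c| ≤ c₀: g_c has exactly two zeros in D(F_c, ρ), counted with multiplicity, and (i) if c < 0 the two zeros are real, simple, and lie on opposite sides of F_c, characterized by q(F)^{1/2}(F − F_c) = ±(−c)^{1/2} for the branch of q^{1/2} positive on the reals; (ii) if c = 0 there is a single double zero at F = F_c; (iii) if c > 0 the two zeros are simple, non-real, and complex conjugates of each other, characterized by q(F)^{1/2}(F − F_c) = ±i c^{1/2}. -/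
/-!
A holomorphic zero-free `q` on a disc has a holomorphic square root `s`; choosing its sign
positive on the real diameter, Schwarz reflection makes `s` commute with conjugation. Then
`w = s · (F - F_c)` has `w'(F_c) = s(F_c) ≠ 0`, so it is a holomorphic coordinate near `F_c` in
which `g_c = c + w²`. For small `|c|` every zero in `D(F_c, ρ)` lies where `w` is injective
(`‖q (F - F_c)²‖` is bounded below outside), so the zeros are exactly `w⁻¹(±√(-c))`. As `w`
commutes with conjugation and is increasing on the real axis, they are two real points on either
side of `F_c` for `c < 0`, the double point `F_c` for `c = 0`, and a conjugate pair for `c > 0`.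
-/

open Metric Set Complex Filter Topology ComplexConjugate

section HolomorphicRoots

variable {c : ℂ} {r : ℝ} {q : ℂ → ℂ}

theorem exists_exp_eq_of_ne_zero_on_ball (hq : DifferentiableOn ℂ q (ball c r))
    (hq0 : ∀ z ∈ ball c r, q z ≠ 0) :
    ∃ L : ℂ → ℂ, DifferentiableOn ℂ L (ball c r) ∧ ∀ z ∈ ball c r, exp (L z) = q z := by
  rcases le_or_gt r 0 with hr | hr
  · exact ⟨0, differentiableOn_const 0, by simp [ball_eq_empty.2 hr]⟩
  have hc : c ∈ ball c r := mem_ball_self hr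
  have hlogderiv : DifferentiableOn ℂ (fun z => deriv q z / q z) (ball c r) :=
    (hq.analyticOnNhd isOpen_ball).deriv.differentiableOn.div hq hq0
  obtain ⟨L, hLc, hL⟩ := hlogderiv.isExactOn_ball.with_val_at c (log (q c))
  -- `q * exp (-L)` has derivative zero, so it keeps its value `1` at the centre
  have hderiv : ∀ z ∈ ball c r, HasDerivAt (fun z => q z * exp (-L z)) 0 z := fun z hz => by
    have hexp : HasDerivAt (fun z => exp (-L z)) (exp (-L z) * -(deriv q z / q z)) z :=
      (hL z hz).neg.cexp
    refine ((hq.differentiableAt (isOpen_ball.mem_nhds hz)).hasDerivAt.mul hexp).congr_deriv ?_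
    field_simp [hq0 z hz]
    ring
  have hconst : ∀ z ∈ ball c r, q z * exp (-L z) = 1 := fun z hz => by
    rw [isOpen_ball.is_const_of_deriv_eq_zero (convex_ball c r).isPreconnected
      (fun z hz => (hderiv z hz).differentiableAt.differentiableWithinAt)
      (fun z hz => (hderiv z hz).deriv) hz hc, hLc, exp_neg, exp_log (hq0 c hc),
      mul_inv_cancel₀ (hq0 c hc)]
  refine ⟨L, fun z hz => (hL z hz).differentiableAt.differentiableWithinAt, fun z hz => ?_⟩
  have := hconst z hz
  rw [exp_neg, mul_inv_eq_one₀ (exp_ne_zero _)] at this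
  exact this.symm

theorem exists_sq_eq_of_ne_zero_on_ball (hq : DifferentiableOn ℂ q (ball c r))
    (hq0 : ∀ z ∈ ball c r, q z ≠ 0) :
    ∃ s : ℂ → ℂ, DifferentiableOn ℂ s (ball c r) ∧ ∀ z ∈ ball c r, s z ^ 2 = q z := by
  obtain ⟨L, hLd, hL⟩ := exists_exp_eq_of_ne_zero_on_ball hq hq0
  refine ⟨fun z => exp (L z / 2), (hLd.div_const 2).cexp, fun z hz => ?_⟩
  rw [← exp_nat_mul, ← hL z hz]
  congr 1
  push_cast
  ring

end HolomorphicRoots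

theorem conj_mem_ball_ofReal {x₀ r : ℝ} {z : ℂ} (hz : z ∈ ball (x₀ : ℂ) r) :
    conj z ∈ ball (x₀ : ℂ) r := by
  rwa [mem_ball, ← conj_ofReal, dist_conj_conj]

theorem ofReal_mem_ball_ofReal {x x₀ r : ℝ} : (x : ℂ) ∈ ball (x₀ : ℂ) r ↔ x ∈ ball x₀ r := by
  rw [mem_ball, mem_ball, Complex.dist_eq, ← ofReal_sub, norm_real, Real.dist_eq, Real.norm_eq_abs]

theorem DifferentiableOn.apply_conj_eq_conj_apply {f : ℂ → ℂ} {x₀ r : ℝ}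
    (hf : DifferentiableOn ℂ f (ball (x₀ : ℂ) r))
    (hreal : ∀ x : ℝ, (x : ℂ) ∈ ball (x₀ : ℂ) r → (f x).im = 0) :
    ∀ z ∈ ball (x₀ : ℂ) r, f (conj z) = conj (f z) := by
  intro z hz
  have hx₀ : (x₀ : ℂ) ∈ ball (x₀ : ℂ) r := mem_ball_self (pos_of_mem_ball hz)
  have hreflect : DifferentiableOn ℂ (conj ∘ f ∘ conj) (ball (x₀ : ℂ) r) := fun z hz =>
    (differentiableAt_conj_conj_iff.2 (hf.differentiableAt
      (isOpen_ball.mem_nhds (conj_mem_ball_ofReal hz)))).differentiableWithinAt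
  have hfreq : ∃ᶠ z in 𝓝[≠] (x₀ : ℂ), f z = (conj ∘ f ∘ conj) z := by
    have hmaps : Tendsto ((↑) : ℝ → ℂ) (𝓝[≠] x₀) (𝓝[≠] (x₀ : ℂ)) :=
      continuous_ofReal.continuousWithinAt.tendsto_nhdsWithin
        fun x hx => ofReal_injective.ne hx
    refine hmaps.frequently (Eventually.frequently ?_)
    filter_upwards [nhdsWithin_le_nhds (ball_mem_nhds x₀ (pos_of_mem_ball hz))] with x hx
    simp [conj_eq_iff_im.2 (hreal x (ofReal_mem_ball_ofReal.2 hx))]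
  have := (hf.analyticOnNhd isOpen_ball).eqOn_of_preconnected_of_frequently_eq
    (hreflect.analyticOnNhd isOpen_ball) (convex_ball _ _).isPreconnected hx₀ hfreq
    (conj_mem_ball_ofReal hz)
  simpa using this

theorem exists_sq_eq_pos_on_reals {x₀ r : ℝ} {q : ℂ → ℂ}
    (hq : DifferentiableOn ℂ q (ball (x₀ : ℂ) r)) (hq0 : ∀ z ∈ ball (x₀ : ℂ) r, q z ≠ 0)
    (hqreal : ∀ x : ℝ, (x : ℂ) ∈ ball (x₀ : ℂ) r → (q x).im = 0 ∧ 0 < (q x).re) :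
    ∃ s : ℂ → ℂ, DifferentiableOn ℂ s (ball (x₀ : ℂ) r) ∧
      (∀ z ∈ ball (x₀ : ℂ) r, s z ^ 2 = q z) ∧
      ∀ x : ℝ, (x : ℂ) ∈ ball (x₀ : ℂ) r → (s x).im = 0 ∧ 0 < (s x).re := by
  obtain ⟨s, hs, hsq⟩ := exists_sq_eq_of_ne_zero_on_ball hq hq0
  -- on the real diameter `s` agrees up to a global sign with the positive root of `q`
  have hsign := (convex_ball x₀ r).isPreconnected.eq_or_eq_neg_of_sq_eq
    (f := fun x : ℝ => s x) (g := fun x : ℝ => (√(q x).re : ℂ))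
    (hs.continuousOn.comp continuous_ofReal.continuousOn fun x hx => ofReal_mem_ball_ofReal.2 hx)
    (continuous_ofReal.comp_continuousOn ((continuous_re.comp_continuousOn
      (hq.continuousOn.comp continuous_ofReal.continuousOn
        fun x hx => ofReal_mem_ball_ofReal.2 hx)).sqrt))
    (fun x hx => by
      have hx' := ofReal_mem_ball_ofReal.2 hx
      simp only [Pi.pow_apply, ← ofReal_pow, Real.sq_sqrt (hqreal x hx').2.le, hsq x hx']
      exact (conj_eq_iff_re.1 (conj_eq_iff_im.2 (hqreal x hx').1)).symm)
    (fun hx => by simpa using (Real.sqrt_pos.2 (hqreal _ (ofReal_mem_ball_ofReal.2 hx)).2).ne')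
  obtain ⟨s', hs', hsq', hroot⟩ : ∃ s' : ℂ → ℂ, DifferentiableOn ℂ s' (ball (x₀ : ℂ) r) ∧
      (∀ z ∈ ball (x₀ : ℂ) r, s' z ^ 2 = q z) ∧ ∀ x ∈ ball x₀ r, s' x = (√(q x).re : ℂ) := by
    rcases hsign with h | h
    · exact ⟨s, hs, hsq, h⟩
    · exact ⟨-s, hs.neg, fun z hz => by simp [hsq z hz], fun x hx => by simp [h hx]⟩
  refine ⟨s', hs', hsq', fun x hx => ?_⟩
  rw [hroot x (ofReal_mem_ball_ofReal.1 hx)]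
  simpa using (hqreal x hx).2

theorem HasStrictDerivAt.exists_injOn_ball_subset_image {𝕜 : Type*} [NontriviallyNormedField 𝕜]
    [CompleteSpace 𝕜] {f : 𝕜 → 𝕜} {f' a : 𝕜} (hf : HasStrictDerivAt f f' a) (hf' : f' ≠ 0)
    {U : Set 𝕜} (hU : U ∈ 𝓝 a) :
    ∃ ε > 0, ball a ε ⊆ U ∧ InjOn f (ball a ε) ∧ ∃ δ > 0, ball (f a) δ ⊆ f '' ball a ε := by
  obtain ⟨ε, hε, hεU⟩ := Metric.mem_nhds_iff.1 (inter_mem hU (hf.eventually_left_inverse hf'))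
  refine ⟨ε, hε, fun z hz => (hεU hz).1, fun x hx y hy hxy => ?_, ?_⟩
  · rw [← (hεU hx).2, ← (hεU hy).2]
    exact congrArg _ hxy
  · refine Metric.mem_nhds_iff.1 ?_
    rw [← hf.map_nhds_eq hf']
    exact image_mem_map (ball_mem_nhds a hε)

theorem Set.InjOn.exists_sq_eq_sq_iff {X K : Type*} [CommRing K] [NoZeroDivisors K]
    {w : X → K} {U : Set X} (hw : InjOn w U) {a : K} (ha : a ∈ w '' U) (ha' : -a ∈ w '' U) :
    ∃ z₁ ∈ U, ∃ z₂ ∈ U, w z₁ = a ∧ w z₂ = -a ∧ ∀ z ∈ U, w z ^ 2 = a ^ 2 ↔ z = z₁ ∨ z = z₂ := by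
  obtain ⟨z₁, hz₁, rfl⟩ := ha
  obtain ⟨z₂, hz₂, hw₂⟩ := ha'
  refine ⟨z₁, hz₁, z₂, hz₂, rfl, hw₂, fun z hz => ?_⟩
  rw [sq_eq_sq_iff_eq_or_eq_neg, ← hw₂, hw.eq_iff hz hz₁, hw.eq_iff hz hz₂]

/-- A holomorphic coordinate `w` near the real point `x₀` in which `G = w²`, as
`w = q^{1/2} (F - F_c)` is for `G = q (F - F_c)²`. The coordinate is injective on `ball x₀ ε`, its
image there contains `ball 0 δ`, and `m` bounds `‖G‖` below on the rest of `ball x₀ ρ`. -/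
structure IsSqChart (G w : ℂ → ℂ) (x₀ ρ ε δ m : ℝ) : Prop where
  ε_pos : 0 < ε
  δ_pos : 0 < δ
  m_pos : 0 < m
  ball_subset : ball (x₀ : ℂ) ε ⊆ ball (x₀ : ℂ) ρ
  eq_sq : ∀ z ∈ ball (x₀ : ℂ) ε, G z = w z ^ 2
  differentiableOn : DifferentiableOn ℂ w (ball (x₀ : ℂ) ε)
  deriv_ne_zero : ∀ z ∈ ball (x₀ : ℂ) ε, deriv w z ≠ 0
  injOn : InjOn w (ball (x₀ : ℂ) ε)
  ball_subset_image : ball 0 δ ⊆ w '' ball (x₀ : ℂ) ε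
  apply_center : w x₀ = 0
  apply_conj : ∀ z ∈ ball (x₀ : ℂ) ε, w (conj z) = conj (w z)
  apply_ofReal : ∀ x : ℝ, (x : ℂ) ∈ ball (x₀ : ℂ) ε → ∃ σ : ℝ, 0 < σ ∧ w x = σ * (x - x₀)
  le_norm : ∀ z ∈ ball (x₀ : ℂ) ρ, z ∉ ball (x₀ : ℂ) ε → m ≤ ‖G z‖

namespace IsSqChart

variable {G w : ℂ → ℂ} {x₀ ρ ε δ m : ℝ}

theorem center_mem (h : IsSqChart G w x₀ ρ ε δ m) : (x₀ : ℂ) ∈ ball (x₀ : ℂ) ε :=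
  mem_ball_self h.ε_pos

theorem exists_zeros_iff (h : IsSqChart G w x₀ ρ ε δ m) {c a : ℂ} (hc : ‖c‖ < m)
    (ha : a ^ 2 = -c) (haδ : ‖a‖ < δ) :
    ∃ z₁ ∈ ball (x₀ : ℂ) ε, ∃ z₂ ∈ ball (x₀ : ℂ) ε, w z₁ = a ∧ w z₂ = -a ∧
      ∀ z ∈ ball (x₀ : ℂ) ρ, c + G z = 0 ↔ z = z₁ ∨ z = z₂ := by
  have hmem : ∀ b : ℂ, ‖b‖ < δ → b ∈ w '' ball (x₀ : ℂ) ε := fun b hb =>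
    h.ball_subset_image (mem_ball_zero_iff.2 hb)
  obtain ⟨z₁, hz₁, z₂, hz₂, hw₁, hw₂, hiff⟩ :=
    h.injOn.exists_sq_eq_sq_iff (hmem a haδ) (hmem (-a) (by rwa [norm_neg]))
  refine ⟨z₁, hz₁, z₂, hz₂, hw₁, hw₂, fun z hz => ?_⟩
  by_cases hzε : z ∈ ball (x₀ : ℂ) ε
  · rw [← hiff z hzε, h.eq_sq z hzε, ha, add_eq_zero_iff_eq_neg']
  · have hG : c + G z ≠ 0 := fun h0 => by
      have := h.le_norm z hz hzε
      rw [eq_neg_of_add_eq_zero_right h0, norm_neg] at this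
      linarith
    refine iff_of_false hG ?_
    rintro (rfl | rfl) <;> contradiction

theorem hasDerivAt_const_add (h : IsSqChart G w x₀ ρ ε δ m) (c : ℂ) {z : ℂ}
    (hz : z ∈ ball (x₀ : ℂ) ε) : HasDerivAt (fun z => c + G z) (2 * w z * deriv w z) z := by
  have hw := (h.differentiableOn.differentiableAt (isOpen_ball.mem_nhds hz)).hasDerivAt
  refine ((hw.pow 2).const_add c).congr_of_eventuallyEq ?_ |>.congr_deriv (by ring)
  filter_upwards [isOpen_ball.mem_nhds hz] with y hy
  rw [h.eq_sq y hy, Pi.pow_apply]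

theorem deriv_const_add_ne_zero (h : IsSqChart G w x₀ ρ ε δ m) (c : ℂ) {z : ℂ}
    (hz : z ∈ ball (x₀ : ℂ) ε) (hw : w z ≠ 0) : deriv (fun z => c + G z) z ≠ 0 := by
  rw [(h.hasDerivAt_const_add c hz).deriv]
  exact mul_ne_zero (mul_ne_zero two_ne_zero hw) (h.deriv_ne_zero z hz)

theorem eq_conj_of_apply_eq_conj (h : IsSqChart G w x₀ ρ ε δ m) {z₁ z₂ : ℂ}
    (hz₁ : z₁ ∈ ball (x₀ : ℂ) ε) (hz₂ : z₂ ∈ ball (x₀ : ℂ) ε) (hw : w z₂ = conj (w z₁)) :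
    z₂ = conj z₁ :=
  h.injOn hz₂ (conj_mem_ball_ofReal hz₁) (by rw [hw, h.apply_conj z₁ hz₁])

theorem sqrt_abs_lt (h : IsSqChart G w x₀ ρ ε δ m) {c : ℝ} (hcδ : |c| < δ ^ 2) : √|c| < δ :=
  (Real.sqrt_lt' h.δ_pos).2 hcδ

theorem exists_pos_mul_eq_of_apply_ofReal_eq (h : IsSqChart G w x₀ ρ ε δ m) {x t : ℝ}
    (hx : (x : ℂ) ∈ ball (x₀ : ℂ) ε) (hw : w x = t) : ∃ σ > 0, t = σ * (x - x₀) := by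
  obtain ⟨σ, hσ, hwx⟩ := h.apply_ofReal x hx
  exact ⟨σ, hσ, by exact_mod_cast hw.symm.trans hwx⟩

theorem ofReal_re_eq_of_apply_eq_ofReal (h : IsSqChart G w x₀ ρ ε δ m) {z : ℂ}
    (hz : z ∈ ball (x₀ : ℂ) ε) {t : ℝ} (hw : w z = t) : (z.re : ℂ) = z :=
  conj_eq_iff_re.1 (h.eq_conj_of_apply_eq_conj hz hz (by rw [hw, conj_ofReal])).symm

theorem exists_real_zeros_of_neg (h : IsSqChart G w x₀ ρ ε δ m) {c : ℝ} (hcm : |c| < m)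
    (hcδ : |c| < δ ^ 2) (hc : c < 0) :
    ∃ F₁ F₂ : ℝ, F₁ < x₀ ∧ x₀ < F₂ ∧
      (F₁ : ℂ) ∈ ball (x₀ : ℂ) ρ ∧ (F₂ : ℂ) ∈ ball (x₀ : ℂ) ρ ∧
      (∀ z ∈ ball (x₀ : ℂ) ρ, ((c : ℂ) + G z = 0 ↔ z = F₁ ∨ z = F₂)) ∧
      deriv (fun z => (c : ℂ) + G z) F₁ ≠ 0 ∧ deriv (fun z => (c : ℂ) + G z) F₂ ≠ 0 ∧
      (∀ z ∈ ball (x₀ : ℂ) ρ, (c : ℂ) + G z = 0 →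
        w z = (√(-c) : ℝ) ∨ w z = -((√(-c) : ℝ) : ℂ)) := by
  have hroot_pos : 0 < √(-c) := Real.sqrt_pos.2 (neg_pos.2 hc)
  have hroot_sq : ((√(-c) : ℝ) : ℂ) ^ 2 = -(c : ℂ) := by
    rw [← ofReal_pow, Real.sq_sqrt (neg_nonneg.2 hc.le), ofReal_neg]
  have hroot_lt : ‖((√(-c) : ℝ) : ℂ)‖ < δ := by
    rw [norm_real, Real.norm_of_nonneg hroot_pos.le, ← abs_of_neg hc]
    exact h.sqrt_abs_lt hcδ
  obtain ⟨z₂, hz₂, z₁, hz₁, hw₂, hw₁, hiff⟩ :=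
    h.exists_zeros_iff (by rwa [norm_real, Real.norm_eq_abs]) hroot_sq hroot_lt
  rw [← ofReal_neg] at hw₁
  have hz₁re := h.ofReal_re_eq_of_apply_eq_ofReal hz₁ hw₁
  have hz₂re := h.ofReal_re_eq_of_apply_eq_ofReal hz₂ hw₂
  obtain ⟨σ₁, hσ₁, h₁⟩ := h.exists_pos_mul_eq_of_apply_ofReal_eq (hz₁re ▸ hz₁) (hz₁re ▸ hw₁)
  obtain ⟨σ₂, hσ₂, h₂⟩ := h.exists_pos_mul_eq_of_apply_ofReal_eq (hz₂re ▸ hz₂) (hz₂re ▸ hw₂)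
  refine ⟨z₁.re, z₂.re, sub_neg.1 (neg_of_mul_neg_right (h₁ ▸ neg_neg_of_pos hroot_pos) hσ₁.le),
    sub_pos.1 (pos_of_mul_pos_right (h₂ ▸ hroot_pos) hσ₂.le), ?_⟩
  rw [hz₁re, hz₂re]
  refine ⟨h.ball_subset hz₁, h.ball_subset hz₂, fun z hz => (hiff z hz).trans or_comm,
    h.deriv_const_add_ne_zero _ hz₁ (by simpa [hw₁] using hroot_pos.ne'),
    h.deriv_const_add_ne_zero _ hz₂ (by simpa [hw₂] using hroot_pos.ne'), fun z hz h0 => ?_⟩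
  rcases (hiff z hz).1 h0 with rfl | rfl
  · exact Or.inl hw₂
  · exact Or.inr (by rw [hw₁, ofReal_neg])

theorem double_zero (h : IsSqChart G w x₀ ρ ε δ m) :
    (∀ z ∈ ball (x₀ : ℂ) ρ, (G z = 0 ↔ z = x₀)) ∧ deriv G x₀ = 0 ∧ deriv (deriv G) x₀ ≠ 0 := by
  obtain ⟨z₁, hz₁, z₂, hz₂, hw₁, hw₂, hiff⟩ :=
    h.exists_zeros_iff (c := 0) (a := 0) (by simpa using h.m_pos) (by ring)
      (by simpa using h.δ_pos)
  have hcenter : ∀ z ∈ ball (x₀ : ℂ) ε, w z = 0 → z = x₀ := fun z hz hwz =>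
    h.injOn hz h.center_mem (hwz.trans h.apply_center.symm)
  rw [neg_zero] at hw₂
  obtain rfl := hcenter z₁ hz₁ hw₁
  obtain rfl := hcenter z₂ hz₂ hw₂
  have hG : ∀ z ∈ ball (x₀ : ℂ) ε, HasDerivAt G (2 * w z * deriv w z) z := fun z hz => by
    simpa using h.hasDerivAt_const_add 0 hz
  have hw' := (h.differentiableOn.analyticOnNhd isOpen_ball).deriv x₀ h.center_mem
  have hG' : HasDerivAt (deriv G) (2 * deriv w x₀ * deriv w x₀) x₀ := by
    have hw := (h.differentiableOn.differentiableAt (isOpen_ball.mem_nhds h.center_mem)).hasDerivAt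
    refine (((hw.const_mul 2).mul hw'.differentiableAt.hasDerivAt).congr_of_eventuallyEq ?_)
      |>.congr_deriv ?_
    · filter_upwards [isOpen_ball.mem_nhds h.center_mem] with z hz
      exact (hG z hz).deriv
    · rw [h.apply_center]
      ring
  refine ⟨fun z hz => by simpa using hiff z hz, ?_, ?_⟩
  · rw [(hG x₀ h.center_mem).deriv, h.apply_center]
    ring
  rw [hG'.deriv]
  exact mul_ne_zero (mul_ne_zero two_ne_zero (h.deriv_ne_zero x₀ h.center_mem))
    (h.deriv_ne_zero x₀ h.center_mem)

theorem exists_conj_zeros_of_pos (h : IsSqChart G w x₀ ρ ε δ m) {c : ℝ} (hcm : |c| < m)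
    (hcδ : |c| < δ ^ 2) (hc : 0 < c) :
    ∃ z₀ : ℂ, z₀ ∈ ball (x₀ : ℂ) ρ ∧ z₀.im ≠ 0 ∧
      (∀ z ∈ ball (x₀ : ℂ) ρ, ((c : ℂ) + G z = 0 ↔ z = z₀ ∨ z = conj z₀)) ∧
      deriv (fun z => (c : ℂ) + G z) z₀ ≠ 0 ∧ deriv (fun z => (c : ℂ) + G z) (conj z₀) ≠ 0 ∧
      (∀ z ∈ ball (x₀ : ℂ) ρ, (c : ℂ) + G z = 0 →
        w z = I * ((√c : ℝ) : ℂ) ∨ w z = -(I * ((√c : ℝ) : ℂ))) := by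
  have hroot_pos : 0 < √c := Real.sqrt_pos.2 hc
  have hroot_sq : (I * ((√c : ℝ) : ℂ)) ^ 2 = -(c : ℂ) := by
    rw [mul_pow, I_sq, ← ofReal_pow, Real.sq_sqrt hc.le, neg_one_mul]
  have hroot_lt : ‖I * ((√c : ℝ) : ℂ)‖ < δ := by
    rw [norm_mul, norm_I, one_mul, norm_real, Real.norm_of_nonneg hroot_pos.le, ← abs_of_pos hc]
    exact h.sqrt_abs_lt hcδ
  have hroot_ne : I * ((√c : ℝ) : ℂ) ≠ 0 := mul_ne_zero I_ne_zero (ofReal_ne_zero.2 hroot_pos.ne')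
  obtain ⟨z₀, hz₀, z₁, hz₁, hw₀, hw₁, hiff⟩ :=
    h.exists_zeros_iff (by rwa [norm_real, Real.norm_eq_abs]) hroot_sq hroot_lt
  obtain rfl : z₁ = conj z₀ := h.eq_conj_of_apply_eq_conj hz₀ hz₁ (by simp [hw₀, hw₁])
  have him : z₀.im ≠ 0 := fun him => by
    have hz₀re : (z₀.re : ℂ) = z₀ := conj_eq_iff_re.1 (conj_eq_iff_im.2 him)
    obtain ⟨σ, -, hσ⟩ := h.apply_ofReal z₀.re (hz₀re ▸ hz₀)
    rw [hz₀re, hw₀] at hσ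
    simpa [hroot_pos.ne', him] using congrArg im hσ
  refine ⟨z₀, h.ball_subset hz₀, him, hiff, h.deriv_const_add_ne_zero _ hz₀ (hw₀ ▸ hroot_ne),
    h.deriv_const_add_ne_zero _ hz₁ (hw₁ ▸ neg_ne_zero.2 hroot_ne), fun z hz h0 => ?_⟩
  rcases (hiff z hz).1 h0 with rfl | rfl
  · exact Or.inl hw₀
  · exact Or.inr hw₁

end IsSqChart

theorem exists_isSqChart {x₀ r ρ : ℝ} (hρ : 0 < ρ) (hρr : ρ < r) {q s : ℂ → ℂ}
    (hs : DifferentiableOn ℂ s (ball (x₀ : ℂ) r)) (hsq : ∀ z ∈ ball (x₀ : ℂ) r, s z ^ 2 = q z)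
    (hq0 : ∀ z ∈ ball (x₀ : ℂ) r, q z ≠ 0)
    (hsreal : ∀ x : ℝ, (x : ℂ) ∈ ball (x₀ : ℂ) r → (s x).im = 0 ∧ 0 < (s x).re) :
    ∃ ε δ m, IsSqChart (fun z => q z * (z - x₀) ^ 2) (fun z => s z * (z - x₀)) x₀ ρ ε δ m := by
  set w : ℂ → ℂ := fun z => s z * (z - x₀)
  have hρB : ball (x₀ : ℂ) ρ ⊆ ball (x₀ : ℂ) r := ball_subset_ball hρr.le
  have hx₀ : (x₀ : ℂ) ∈ ball (x₀ : ℂ) r := mem_ball_self (hρ.trans hρr)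
  have hwd : DifferentiableOn ℂ w (ball (x₀ : ℂ) r) := hs.mul (differentiableOn_id.sub_const _)
  have hwa := hwd.analyticOnNhd isOpen_ball
  have hw'x₀ : deriv w x₀ = s x₀ := by
    have : HasDerivAt w (deriv s x₀ * (x₀ - x₀) + s x₀ * 1) x₀ :=
      (hs.differentiableAt (isOpen_ball.mem_nhds hx₀)).hasDerivAt.mul
        ((hasDerivAt_id (x₀ : ℂ)).sub_const (x₀ : ℂ))
    rw [this.deriv]
    ring
  have hsx₀ : s x₀ ≠ 0 := fun h0 => by simpa [h0] using (hsreal x₀ hx₀).2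
  have hU : ball (x₀ : ℂ) ρ ∩ {z | deriv w z ≠ 0} ∈ 𝓝 (x₀ : ℂ) :=
    inter_mem (ball_mem_nhds _ hρ)
      ((hwa.deriv x₀ hx₀).continuousAt.eventually_ne (hw'x₀ ▸ hsx₀))
  obtain ⟨ε, hε, hεU, hinj, δ, hδ, himage⟩ :=
    (hwa x₀ hx₀).hasStrictDerivAt.exists_injOn_ball_subset_image (hw'x₀ ▸ hsx₀) hU
  have hεB : ball (x₀ : ℂ) ε ⊆ ball (x₀ : ℂ) r := fun z hz => hρB (hεU hz).1
  have hK : IsCompact (closedBall (x₀ : ℂ) ρ \ ball (x₀ : ℂ) ε) :=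
    (isCompact_closedBall _ _).diff isOpen_ball
  have hKB : closedBall (x₀ : ℂ) ρ \ ball (x₀ : ℂ) ε ⊆ ball (x₀ : ℂ) r :=
    fun z hz => closedBall_subset_ball hρr hz.1
  have hsq_w : ∀ z ∈ ball (x₀ : ℂ) r, q z * (z - x₀) ^ 2 = w z ^ 2 := fun z hz => by
    simp only [w, mul_pow, hsq z hz]
  obtain ⟨m, hm, hmK⟩ := hK.exists_forall_le' ((hwd.continuousOn.pow 2).mono hKB).norm
    fun z hz => norm_pos_iff.2 <| by
      rw [Pi.pow_apply, ← hsq_w z (hKB hz)]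
      exact mul_ne_zero (hq0 z (hKB hz))
        (pow_ne_zero 2 (sub_ne_zero.2 fun h => hz.2 (h ▸ mem_ball_self hε)))
  refine ⟨ε, δ, m, ⟨hε, hδ, hm, fun z hz => (hεU hz).1, fun z hz => ?_, hwd.mono hεB,
    fun z hz => (hεU hz).2, hinj, by simpa [w] using himage, by simp [w], fun z hz => ?_,
    fun x hx => ?_, fun z hz hzε => ?_⟩⟩
  · exact hsq_w z (hεB hz)
  · change s (conj z) * (conj z - x₀) = conj (s z * (z - x₀))
    rw [hs.apply_conj_eq_conj_apply (fun x hx => (hsreal x hx).1) z (hεB hz), map_mul, map_sub,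
      conj_ofReal]
  · have hsx : s x = (s x).re := (conj_eq_iff_re.1 (conj_eq_iff_im.2 (hsreal x (hεB hx)).1)).symm
    exact ⟨(s x).re, (hsreal x (hεB hx)).2, by rw [← hsx]⟩
  · have := hmK z ⟨ball_subset_closedBall hz, hzε⟩
    rwa [hsq_w z (hρB hz), ← Pi.pow_apply]

theorem stmt_18_general (Fc r : ℝ) (q : ℂ → ℂ)
    (hq : DifferentiableOn ℂ q (Metric.ball (Fc:ℂ) r))
    (hqne : ∀ z ∈ Metric.ball (Fc:ℂ) r, q z ≠ 0)
    (hqreal : ∀ x : ℝ, (x:ℂ) ∈ Metric.ball (Fc:ℂ) r →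
      (q (x:ℂ)).im = 0 ∧ 0 < (q (x:ℂ)).re) :
    ∀ ρ : ℝ, 0 < ρ → ρ < r →
      ∃ c₀ > (0:ℝ), ∃ s : ℂ → ℂ,
        DifferentiableOn ℂ s (Metric.ball (Fc:ℂ) r) ∧
        (∀ z ∈ Metric.ball (Fc:ℂ) r, (s z)^2 = q z) ∧
        (∀ x : ℝ, (x:ℂ) ∈ Metric.ball (Fc:ℂ) r →
          (s (x:ℂ)).im = 0 ∧ 0 < (s (x:ℂ)).re) ∧
        ∀ c : ℝ, |c| ≤ c₀ →
          (c < 0 → ∃ F₁ F₂ : ℝ, F₁ < Fc ∧ Fc < F₂ ∧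
            (F₁:ℂ) ∈ Metric.ball (Fc:ℂ) ρ ∧ (F₂:ℂ) ∈ Metric.ball (Fc:ℂ) ρ ∧
            (∀ z ∈ Metric.ball (Fc:ℂ) ρ,
              ((c:ℂ) + q z * (z - (Fc:ℂ))^2 = 0 ↔ z = (F₁:ℂ) ∨ z = (F₂:ℂ))) ∧
            deriv (fun z => (c:ℂ) + q z * (z - (Fc:ℂ))^2) (F₁:ℂ) ≠ 0 ∧
            deriv (fun z => (c:ℂ) + q z * (z - (Fc:ℂ))^2) (F₂:ℂ) ≠ 0 ∧
            (∀ z ∈ Metric.ball (Fc:ℂ) ρ, (c:ℂ) + q z * (z - (Fc:ℂ))^2 = 0 →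
              s z * (z - (Fc:ℂ)) = (Real.sqrt (-c) : ℝ) ∨
              s z * (z - (Fc:ℂ)) = -((Real.sqrt (-c) : ℝ) : ℂ))) ∧
          (c = 0 → (∀ z ∈ Metric.ball (Fc:ℂ) ρ,
              ((c:ℂ) + q z * (z - (Fc:ℂ))^2 = 0 ↔ z = (Fc:ℂ))) ∧
            deriv (fun z => (c:ℂ) + q z * (z - (Fc:ℂ))^2) (Fc:ℂ) = 0 ∧
            deriv (deriv (fun z => (c:ℂ) + q z * (z - (Fc:ℂ))^2)) (Fc:ℂ) ≠ 0) ∧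
          (0 < c → ∃ z₀ : ℂ, z₀ ∈ Metric.ball (Fc:ℂ) ρ ∧ z₀.im ≠ 0 ∧
            (∀ z ∈ Metric.ball (Fc:ℂ) ρ,
              ((c:ℂ) + q z * (z - (Fc:ℂ))^2 = 0 ↔
                z = z₀ ∨ z = (starRingEnd ℂ) z₀)) ∧
            deriv (fun z => (c:ℂ) + q z * (z - (Fc:ℂ))^2) z₀ ≠ 0 ∧
            deriv (fun z => (c:ℂ) + q z * (z - (Fc:ℂ))^2) ((starRingEnd ℂ) z₀) ≠ 0 ∧
            (∀ z ∈ Metric.ball (Fc:ℂ) ρ, (c:ℂ) + q z * (z - (Fc:ℂ))^2 = 0 →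
              s z * (z - (Fc:ℂ)) = Complex.I * ((Real.sqrt c : ℝ) : ℂ) ∨
              s z * (z - (Fc:ℂ)) = -(Complex.I * ((Real.sqrt c : ℝ) : ℂ)))) := by
  intro ρ hρ hρr
  obtain ⟨s, hs, hsq, hsreal⟩ := exists_sq_eq_pos_on_reals hq hqne hqreal
  obtain ⟨ε, δ, m, h⟩ := exists_isSqChart hρ hρr hs hsq hqne hsreal
  have hδ2 : 0 < δ ^ 2 := pow_pos h.δ_pos 2
  refine ⟨min (m / 2) (δ ^ 2 / 2), lt_min (half_pos h.m_pos) (half_pos hδ2), s, hs, hsq, hsreal,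
    fun c hc => ?_⟩
  have hcm : |c| < m := hc.trans_lt ((min_le_left _ _).trans_lt (half_lt_self h.m_pos))
  have hcδ : |c| < δ ^ 2 := hc.trans_lt ((min_le_right _ _).trans_lt (half_lt_self hδ2))
  refine ⟨h.exists_real_zeros_of_neg hcm hcδ, fun hc0 => ?_, h.exists_conj_zeros_of_pos hcm hcδ⟩
  subst hc0
  simpa only [ofReal_zero, zero_add] using h.double_zero

/-- the PT-symmetry-breaking trichotomy for
`g_c(F) = c + q(F)(F − F_c)²` with `q` holomorphic, nonvanishing, real and
positive on the reals near `F_c`. For each `ρ ∈ (0,r)` there is `c₀ > 0` such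
that for all real `c` with `|c| ≤ c₀`: if `c < 0` the zeros of `g_c` in
`D(F_c,ρ)` are two simple real zeros on opposite sides of `F_c`, characterized by
`q^{1/2}(F)(F − F_c) = ±√(−c)`; if `c = 0` there is the single double zero
`F = F_c`; if `c > 0` the zeros are two simple complex-conjugate non-real zeros,
characterized by `q^{1/2}(F)(F − F_c) = ±i√c`. Here `q^{1/2} = s` is the branch
positive on the reals. -/
theorem stmt_18 (Fc r : ℝ) (hr : 0 < r) (q : ℂ → ℂ)
    (hq : DifferentiableOn ℂ q (Metric.ball (Fc:ℂ) r))
    (hqne : ∀ z ∈ Metric.ball (Fc:ℂ) r, q z ≠ 0)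
    (hqreal : ∀ x : ℝ, (x:ℂ) ∈ Metric.ball (Fc:ℂ) r →
      (q (x:ℂ)).im = 0 ∧ 0 < (q (x:ℂ)).re) :
    ∀ ρ : ℝ, 0 < ρ → ρ < r →
      ∃ c₀ > (0:ℝ), ∃ s : ℂ → ℂ,
        DifferentiableOn ℂ s (Metric.ball (Fc:ℂ) r) ∧
        (∀ z ∈ Metric.ball (Fc:ℂ) r, (s z)^2 = q z) ∧
        (∀ x : ℝ, (x:ℂ) ∈ Metric.ball (Fc:ℂ) r →
          (s (x:ℂ)).im = 0 ∧ 0 < (s (x:ℂ)).re) ∧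
        ∀ c : ℝ, |c| ≤ c₀ →
          (c < 0 → ∃ F₁ F₂ : ℝ, F₁ < Fc ∧ Fc < F₂ ∧
            (F₁:ℂ) ∈ Metric.ball (Fc:ℂ) ρ ∧ (F₂:ℂ) ∈ Metric.ball (Fc:ℂ) ρ ∧
            (∀ z ∈ Metric.ball (Fc:ℂ) ρ,
              ((c:ℂ) + q z * (z - (Fc:ℂ))^2 = 0 ↔ z = (F₁:ℂ) ∨ z = (F₂:ℂ))) ∧
            deriv (fun z => (c:ℂ) + q z * (z - (Fc:ℂ))^2) (F₁:ℂ) ≠ 0 ∧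
            deriv (fun z => (c:ℂ) + q z * (z - (Fc:ℂ))^2) (F₂:ℂ) ≠ 0 ∧
            (∀ z ∈ Metric.ball (Fc:ℂ) ρ, (c:ℂ) + q z * (z - (Fc:ℂ))^2 = 0 →
              s z * (z - (Fc:ℂ)) = (Real.sqrt (-c) : ℝ) ∨
              s z * (z - (Fc:ℂ)) = -((Real.sqrt (-c) : ℝ) : ℂ))) ∧
          (c = 0 → (∀ z ∈ Metric.ball (Fc:ℂ) ρ,
              ((c:ℂ) + q z * (z - (Fc:ℂ))^2 = 0 ↔ z = (Fc:ℂ))) ∧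
            deriv (fun z => (c:ℂ) + q z * (z - (Fc:ℂ))^2) (Fc:ℂ) = 0 ∧
            deriv (deriv (fun z => (c:ℂ) + q z * (z - (Fc:ℂ))^2)) (Fc:ℂ) ≠ 0) ∧
          (0 < c → ∃ z₀ : ℂ, z₀ ∈ Metric.ball (Fc:ℂ) ρ ∧ z₀.im ≠ 0 ∧
            (∀ z ∈ Metric.ball (Fc:ℂ) ρ,
              ((c:ℂ) + q z * (z - (Fc:ℂ))^2 = 0 ↔
                z = z₀ ∨ z = (starRingEnd ℂ) z₀)) ∧
            deriv (fun z => (c:ℂ) + q z * (z - (Fc:ℂ))^2) z₀ ≠ 0 ∧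
            deriv (fun z => (c:ℂ) + q z * (z - (Fc:ℂ))^2) ((starRingEnd ℂ) z₀) ≠ 0 ∧
            (∀ z ∈ Metric.ball (Fc:ℂ) ρ, (c:ℂ) + q z * (z - (Fc:ℂ))^2 = 0 →
              s z * (z - (Fc:ℂ)) = Complex.I * ((Real.sqrt c : ℝ) : ℂ) ∨
              s z * (z - (Fc:ℂ)) = -(Complex.I * ((Real.sqrt c : ℝ) : ℂ)))) :=
  stmt_18_general Fc r q hq hqne hqreal
end
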